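/- arXiv:2510.20318 — 6 statements merged into one kernel-verified Lean document; each statement's English description precedes it below -/
import Mathlib

section
/- For every finite simple graph G, the number of Laplacian eigenvalues of G lying in the interval [0,1), counted with multiplicity, is at most the domination number of G; that is, μ(G) ≤ γ(G). -/
open SimpleGraph

section Defs

variable {V : Type*}

/-- A dominating set: every vertex is in `D` or adjacent to a vertex of `D`. -/
def IsDomSet (G : SimpleGraph V) (D : Finset V) : Prop :=
  ∀ v : V, v ∈ D ∨ ∃ u ∈ D, G.Adj u v

/-- The domination number: minimum size of a dominating set. -/
noncomputable def domNum (G : SimpleGraph V) : ℕ :=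
  sInf {n : ℕ | ∃ D : Finset V, IsDomSet G D ∧ D.card = n}

/-- Number of Laplacian eigenvalues (with multiplicity) in `[0,1)`,
equivalently `< 1` since the Laplacian is positive semidefinite. -/
noncomputable def muNum [Fintype V] [DecidableEq V] (G : SimpleGraph V) : ℕ :=
  letI := Classical.decRel G.Adj
  Nat.card {i : V // (SimpleGraph.posSemidef_lapMatrix ℝ G).isHermitian.eigenvalues i < 1}

/-- Number of Laplacian eigenvalues (with multiplicity) that are at least `2`. -/
noncomputable def nuNum [Fintype V] [DecidableEq V] (G : SimpleGraph V) : ℕ :=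
  letI := Classical.decRel G.Adj
  Nat.card {i : V // 2 ≤ (SimpleGraph.posSemidef_lapMatrix ℝ G).isHermitian.eigenvalues i}

/-- The degree of a vertex, as the number of its neighbors. -/
noncomputable def degNat (G : SimpleGraph V) (v : V) : ℕ :=
  Nat.card {u : V // G.Adj v u}

/-- A leaf is a vertex of degree one. -/
def IsLeaf (G : SimpleGraph V) (v : V) : Prop := degNat G v = 1

/-- A penultimate vertex is a non-leaf adjacent to a leaf. -/
def IsPenultimate (G : SimpleGraph V) (v : V) : Prop :=
  ¬ IsLeaf G v ∧ ∃ u, G.Adj v u ∧ IsLeaf G u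

/-- A deep vertex is neither a leaf nor penultimate. -/
def IsDeep (G : SimpleGraph V) (v : V) : Prop :=
  ¬ IsLeaf G v ∧ ¬ IsPenultimate G v

/-- The number of penultimate vertices. -/
noncomputable def pNum (G : SimpleGraph V) : ℕ :=
  Nat.card {v : V // IsPenultimate G v}

/-- Contraction of the clean path `a-b-c-d`: the graph on `V \ {b,c,d}` in which `x,y`
are adjacent iff they are adjacent in the original graph, or one of them equals `a` and
the other is a neighbor of `d` (any surviving neighbor of `d` is automatically `≠ c`). -/
def contractCleanPath (G : SimpleGraph V) (a _b c d : V) :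
    SimpleGraph {x : V // x ≠ _b ∧ x ≠ c ∧ x ≠ d} :=
  SimpleGraph.fromRel (fun x y => G.Adj x.1 y.1 ∨ (x.1 = a ∧ G.Adj d y.1))

end Defs
section AuxLemmas

open Finset Matrix InnerProductSpace

private lemma inner_eq_sum_mul {n : Type*} [Fintype n] (y z : EuclideanSpace ℝ n) :
    ⟪y, z⟫_ℝ = ∑ u, y u * z u := by
  simp [PiLp.inner_apply, RCLike.inner_apply]
  exact Finset.sum_congr rfl fun _ _ => mul_comm _ _

/-- On the span of eigenvectors with eigenvalue `< t`, the quadratic form is `< t‖x‖²`. -/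
private lemma quad_lt_of_mem_span {n : Type*} [Fintype n] [DecidableEq n]
    {A : Matrix n n ℝ} (hA : A.IsHermitian) {t : ℝ} (x : EuclideanSpace ℝ n)
    (hx : x ∈ Submodule.span ℝ (Set.range
      (fun i : {i : n // hA.eigenvalues i < t} => hA.eigenvectorBasis i.1)))
    (hx0 : x ≠ 0) :
    x ⬝ᵥ (A *ᵥ x) < t * ∑ u, x u ^ 2 := by
  classical
  set v := hA.eigenvectorBasis with hv
  set lam := hA.eigenvalues with hlam
  obtain ⟨c, hc⟩ := (Submodule.mem_span_range_iff_exists_fun ℝ).mp hx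
  have horth : ∀ i j : {i : n // lam i < t},
      ⟪(v i.1 : EuclideanSpace ℝ n), v j.1⟫_ℝ = if i = j then 1 else 0 := by
    intro i j
    rw [orthonormal_iff_ite.mp v.orthonormal i.1 j.1]
    simp [Subtype.ext_iff]
  have hAv : ∀ i : {i : n // lam i < t},
      Matrix.toEuclideanLin A (v i.1) = lam i.1 • v i.1 := fun i =>
    congrArg (WithLp.toLp 2) (hA.mulVec_eigenvectorBasis i.1)
  have hAx : Matrix.toEuclideanLin A x = ∑ i, c i • (lam i.1 • (v i.1 : EuclideanSpace ℝ n)) := by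
    rw [← hc, map_sum]
    exact Finset.sum_congr rfl fun i _ => by rw [_root_.map_smul, hAv i]
  have h1 : x ⬝ᵥ (A *ᵥ x) = ⟪x, Matrix.toEuclideanLin A x⟫_ℝ :=
    (inner_eq_sum_mul x (Matrix.toEuclideanLin A x)).symm
  have h2 : ⟪x, Matrix.toEuclideanLin A x⟫_ℝ = ∑ i, lam i.1 * c i ^ 2 := by
    rw [hAx, ← hc]
    rw [sum_inner]
    refine Finset.sum_congr rfl fun i _ => ?_
    rw [inner_sum]
    rw [Finset.sum_eq_single i]
    · rw [real_inner_smul_left, real_inner_smul_right, real_inner_smul_right, horth]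
      simp; ring
    · intro j _ hj
      rw [real_inner_smul_left, real_inner_smul_right, real_inner_smul_right, horth]
      simp [hj.symm]
    · intro h; exact absurd (Finset.mem_univ i) h
  have h3 : ∑ u, x u ^ 2 = ∑ i, c i ^ 2 := by
    have : ∑ u, x u ^ 2 = ⟪x, x⟫_ℝ := by
      rw [inner_eq_sum_mul]
      exact Finset.sum_congr rfl fun u _ => (sq (x u) ▸ rfl)
    rw [this]
    conv_lhs => rw [← hc]
    rw [sum_inner]
    refine Finset.sum_congr rfl fun i _ => ?_
    rw [inner_sum, Finset.sum_eq_single i]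
    · rw [real_inner_smul_left, real_inner_smul_right, horth]
      simp; ring
    · intro j _ hj
      rw [real_inner_smul_left, real_inner_smul_right, horth]
      simp [hj.symm]
    · intro h; exact absurd (Finset.mem_univ i) h
  have hex : ∃ i, c i ≠ 0 := by
    by_contra h
    push_neg at h
    apply hx0
    rw [← hc]
    simp [h]
  obtain ⟨i0, hi0⟩ := hex
  rw [h1, h2, h3, Finset.mul_sum]
  refine Finset.sum_lt_sum (fun i _ => ?_) ⟨i0, Finset.mem_univ i0, ?_⟩
  · exact mul_le_mul_of_nonneg_right i.2.le (sq_nonneg _)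
  · exact mul_lt_mul_of_pos_right i0.2 (by positivity)

/-- If `x` vanishes on a dominating set, the Laplacian quadratic form is at least `‖x‖²`. -/
private lemma sum_sq_le_quad {V : Type*} [Fintype V] [DecidableEq V]
    (G : SimpleGraph V) [DecidableRel G.Adj] {D : Finset V} (hD : IsDomSet G D)
    (x : V → ℝ) (hxD : ∀ d ∈ D, x d = 0) :
    ∑ u, x u ^ 2 ≤ x ⬝ᵥ (G.lapMatrix ℝ *ᵥ x) := by
  classical
  have hdom : ∀ u : V, u ∉ D → ∃ w, w ∈ D ∧ G.Adj w u := by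
    intro u hu
    rcases hD u with h | ⟨w, hw, hadj⟩
    · exact absurd h hu
    · exact ⟨w, hw, hadj⟩
  set f : V → V := fun u => if h : ∃ w, w ∈ D ∧ G.Adj w u then h.choose else u with hf
  have hkey : ∀ u ∉ D, f u ∈ D ∧ G.Adj (f u) u := by
    intro u hu
    have h := hdom u hu
    simp only [hf, dif_pos h]
    exact h.choose_spec
  have hq : x ⬝ᵥ (G.lapMatrix ℝ *ᵥ x) =
      (∑ i, ∑ j, if G.Adj i j then (x i - x j) ^ 2 else 0) / 2 := by
    rw [← Matrix.toLinearMap₂'_apply', SimpleGraph.lapMatrix_toLinearMap₂']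
  set g : V × V → ℝ := fun p => if G.Adj p.1 p.2 then (x p.1 - x p.2) ^ 2 else 0 with hg
  have hdouble : ∑ i, ∑ j, (if G.Adj i j then (x i - x j) ^ 2 else 0) = ∑ p : V × V, g p := by
    rw [← Finset.univ_product_univ, Finset.sum_product]
  set T : Finset (V × V) :=
      Dᶜ.image (fun u => (u, f u)) ∪ Dᶜ.image (fun u => (f u, u)) with hT
  have hdisj : Disjoint (Dᶜ.image (fun u => (u, f u))) (Dᶜ.image (fun u => (f u, u))) := by
    rw [Finset.disjoint_left]
    rintro p hp1 hp2
    obtain ⟨u, hu, rfl⟩ := Finset.mem_image.mp hp1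
    obtain ⟨w, hw, hpw⟩ := Finset.mem_image.mp hp2
    have hu' : u ∉ D := Finset.mem_compl.mp hu
    have hw' : w ∉ D := Finset.mem_compl.mp hw
    have : u = f w := congrArg Prod.fst hpw.symm
    exact hu' (this ▸ (hkey w hw').1)
  have hsumT : ∑ p ∈ T, g p = 2 * ∑ u, x u ^ 2 := by
    have hxc : ∑ u ∈ Dᶜ, x u ^ 2 = ∑ u, x u ^ 2 := by
      refine Finset.sum_subset (Finset.subset_univ _) fun u _ hu => ?_
      have : u ∈ D := by simpa using hu
      rw [hxD u this]; ring
    rw [hT, Finset.sum_union hdisj,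
      Finset.sum_image (fun a _ b _ h => congrArg Prod.fst h),
      Finset.sum_image (fun a _ b _ h => congrArg Prod.snd h)]
    have e1 : ∑ u ∈ Dᶜ, g (u, f u) = ∑ u ∈ Dᶜ, x u ^ 2 := by
      refine Finset.sum_congr rfl fun u hu => ?_
      have hu' : u ∉ D := Finset.mem_compl.mp hu
      obtain ⟨hfD, hfadj⟩ := hkey u hu'
      simp only [hg, if_pos hfadj.symm, hxD _ hfD]
      ring
    have e2 : ∑ u ∈ Dᶜ, g (f u, u) = ∑ u ∈ Dᶜ, x u ^ 2 := by
      refine Finset.sum_congr rfl fun u hu => ?_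
      have hu' : u ∉ D := Finset.mem_compl.mp hu
      obtain ⟨hfD, hfadj⟩ := hkey u hu'
      simp only [hg, if_pos hfadj, hxD _ hfD]
      ring
    rw [e1, e2, hxc]
    ring
  have hle : ∑ p ∈ T, g p ≤ ∑ p : V × V, g p := by
    refine Finset.sum_le_sum_of_subset_of_nonneg (Finset.subset_univ _) fun p _ _ => ?_
    simp only [hg]
    split
    · exact sq_nonneg _
    · exact le_refl 0
  rw [hq, hdouble]
  rw [hsumT] at hle
  linarith

end AuxLemmas

/-- For every finite simple graph `G`, the number of Laplacian
eigenvalues of `G` in `[0,1)` (with multiplicity) is at most the domination number: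
`μ(G) ≤ γ(G)`. -/
theorem mu_le_domNum {V : Type*} [Fintype V] [DecidableEq V] (G : SimpleGraph V) :
    muNum G ≤ domNum G := by
  letI instDR := Classical.decRel G.Adj
  classical
  have hne : {n : ℕ | ∃ D : Finset V, IsDomSet G D ∧ D.card = n}.Nonempty :=
    ⟨Finset.univ.card, Finset.univ, fun v => Or.inl (Finset.mem_univ v), rfl⟩
  obtain ⟨D, hD, hDcard0⟩ := Nat.sInf_mem hne
  have hDcard : D.card = domNum G := hDcard0
  by_contra hgt
  push_neg at hgt
  rw [← hDcard] at hgt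
  have hH := (SimpleGraph.posSemidef_lapMatrix ℝ G).isHermitian
  have hmu : muNum G = Nat.card {i : V // hH.eigenvalues i < 1} := rfl
  set U : Submodule ℝ (EuclideanSpace ℝ V) :=
    Submodule.span ℝ (Set.range
      (fun i : {i : V // hH.eigenvalues i < 1} => hH.eigenvectorBasis i.1)) with hUdef
  have horthS : Orthonormal ℝ
      (fun i : {i : V // hH.eigenvalues i < 1} => hH.eigenvectorBasis i.1) :=
    hH.eigenvectorBasis.orthonormal.comp _ Subtype.val_injective
  have hU : Module.finrank ℝ U = Nat.card {i : V // hH.eigenvalues i < 1} := by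
    rw [finrank_span_eq_card horthS.linearIndependent, Nat.card_eq_fintype_card]
  set φ : EuclideanSpace ℝ V →ₗ[ℝ] ({d // d ∈ D} → ℝ) :=
    (LinearMap.funLeft ℝ ℝ (fun d : {d // d ∈ D} => d.1)).comp
      (PiLp.continuousLinearEquiv 2 ℝ (fun _ : V => ℝ)).toLinearEquiv.toLinearMap with hφdef
  set W : Submodule ℝ (EuclideanSpace ℝ V) := LinearMap.ker φ with hWdef
  have hmemW : ∀ x : EuclideanSpace ℝ V, x ∈ W ↔ ∀ d ∈ D, x d = 0 := by
    intro x
    simp only [hWdef, LinearMap.mem_ker, hφdef, LinearMap.coe_comp, Function.comp_apply,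
      LinearEquiv.coe_coe, funext_iff, LinearMap.funLeft_apply, Pi.zero_apply, Subtype.forall]
    rfl
  have hWrank : Fintype.card V ≤ Module.finrank ℝ W + D.card := by
    rw [hWdef]
    have h1 := LinearMap.finrank_range_add_finrank_ker φ
    have h2 : Module.finrank ℝ (EuclideanSpace ℝ V) = Fintype.card V :=
      finrank_euclideanSpace
    have h3 : Module.finrank ℝ (LinearMap.range φ) ≤ D.card := by
      have := Submodule.finrank_le (LinearMap.range φ)
      rwa [Module.finrank_fintype_fun_eq_card, Fintype.card_coe] at this
    omega
  have hsupinf := Submodule.finrank_sup_add_finrank_inf_eq U W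
  have hsup_le : Module.finrank ℝ ↥(U ⊔ W) ≤ Fintype.card V :=
    le_trans (Submodule.finrank_le _) (le_of_eq finrank_euclideanSpace)
  have hpos : 0 < Module.finrank ℝ ↥(U ⊓ W) := by
    rw [hmu] at hgt
    omega
  have : Nontrivial ↥(U ⊓ W) := Module.finrank_pos_iff.mp hpos
  obtain ⟨y, hy⟩ := exists_ne (0 : ↥(U ⊓ W))
  · have hxU : (y : EuclideanSpace ℝ V) ∈ U := (Submodule.mem_inf.mp y.2).1
    have hxW : (y : EuclideanSpace ℝ V) ∈ W := (Submodule.mem_inf.mp y.2).2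
    have hx0 : (y : EuclideanSpace ℝ V) ≠ 0 := by
      simpa [Submodule.coe_eq_zero] using hy
    have h1 := quad_lt_of_mem_span hH (y : EuclideanSpace ℝ V) hxU hx0
    have h2 := sum_sq_le_quad G hD (y : EuclideanSpace ℝ V) ((hmemW _).mp hxW)
    rw [one_mul] at h1
    exact absurd h2 (not_le.mpr h1)
end

section
/- For every finite tree T, the number of penultimate vertices of T is at most the number of Laplacian eigenvalues of T in [0,1); that is, p(T) ≤ μ(T). -/
open SimpleGraph

section Aux

open Matrix

lemma aux_spectral {n : Type*} [Fintype n] [DecidableEq n]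
    {A : Matrix n n ℝ} (hA : A.IsHermitian) (x : n → ℝ)
    (h : ∀ i, hA.eigenvalues i < 1 → (star (hA.eigenvectorUnitary : Matrix n n ℝ) *ᵥ x) i = 0) :
    x ⬝ᵥ x ≤ x ⬝ᵥ (A *ᵥ x) := by
  set U := (hA.eigenvectorUnitary : Matrix n n ℝ) with hU
  set y := star U *ᵥ x with hy
  have hsU : star U = Uᵀ := by
    rw [Matrix.star_eq_conjTranspose, conjTranspose_eq_transpose_of_trivial]
  have hxU : x ᵥ* U = y := by rw [hy, hsU, mulVec_transpose]
  have hyy : y ⬝ᵥ y = x ⬝ᵥ x := by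
    calc y ⬝ᵥ y = (x ᵥ* U) ⬝ᵥ y := by rw [hxU]
    _ = x ⬝ᵥ (U *ᵥ y) := (dotProduct_mulVec x U y).symm
    _ = x ⬝ᵥ ((U * star U) *ᵥ x) := by rw [hy, mulVec_mulVec]
    _ = x ⬝ᵥ x := by
        rw [mem_unitaryGroup_iff.mp hA.eigenvectorUnitary.2, one_mulVec]
  have hquad : x ⬝ᵥ (A *ᵥ x) = ∑ i, hA.eigenvalues i * (y i)^2 := by
    conv_lhs => rw [hA.spectral_theorem, Unitary.conjStarAlgAut_apply]
    rw [← mulVec_mulVec, ← mulVec_mulVec, dotProduct_mulVec, hxU, ← hy]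
    simp only [dotProduct, mulVec_diagonal, Function.comp_apply, RCLike.ofReal_real_eq_id, id_eq]
    exact Finset.sum_congr rfl fun i _ => by ring
  rw [hquad, ← hyy]
  unfold dotProduct
  refine Finset.sum_le_sum fun i _ => ?_
  by_cases hi : hA.eigenvalues i < 1
  · rw [h i hi]; simp
  · push_neg at hi
    nlinarith [sq_nonneg (y i)]

variable {V : Type*}

lemma leaf_adj_eq {G : SimpleGraph V} {w a b : V} (h : IsLeaf G w)
    (ha : G.Adj w a) (hb : G.Adj w b) : a = b := by
  have hs := (Nat.card_eq_one_iff_unique.mp h).1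
  exact congrArg Subtype.val (hs.elim ⟨a, ha⟩ ⟨b, hb⟩)

lemma leaf_degree_eq {G : SimpleGraph V} [Fintype V] [DecidableRel G.Adj] {w : V}
    (h : IsLeaf G w) : G.degree w = 1 := by
  rw [← SimpleGraph.card_neighborSet_eq_degree, ← Nat.card_eq_fintype_card]
  exact h

end Aux

set_option maxHeartbeats 1000000 in
open Matrix in
/-- For every finite tree `T`, the number of penultimate vertices is
at most the number of Laplacian eigenvalues in `[0,1)`: `p(T) ≤ μ(T)`. -/
theorem pNum_le_muNum {V : Type*} [Fintype V] [DecidableEq V]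
    (G : SimpleGraph V) (hT : G.IsTree) :
    pNum G ≤ muNum G := by
  letI hd : DecidableRel G.Adj := Classical.decRel G.Adj
  by_contra hlt
  push_neg at hlt
  haveI : Nonempty V := hT.1.nonempty
  set hA := (SimpleGraph.posSemidef_lapMatrix ℝ G).isHermitian with hAdef
  haveI : Fintype {v : V // IsPenultimate G v} := Fintype.ofFinite _
  haveI : Fintype {i : V // hA.eigenvalues i < 1} := Fintype.ofFinite _
  have hmu : muNum G = Fintype.card {i : V // hA.eigenvalues i < 1} :=
    Nat.card_eq_fintype_card
  have hp : pNum G = Fintype.card {v : V // IsPenultimate G v} :=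
    Nat.card_eq_fintype_card
  -- choose a leaf for each penultimate vertex
  have hex : ∀ v : {v : V // IsPenultimate G v}, ∃ w, G.Adj v.1 w ∧ IsLeaf G w :=
    fun v => v.2.2
  set u : {v : V // IsPenultimate G v} → V := fun v => (hex v).choose with hu
  have hadj : ∀ v, G.Adj v.1 (u v) := fun v => (hex v).choose_spec.1
  have hleaf : ∀ v, IsLeaf G (u v) := fun v => (hex v).choose_spec.2
  have huNP : ∀ (v v' : {v : V // IsPenultimate G v}), u v ≠ v'.1 := by
    intro v v' h
    exact v'.2.1 (h ▸ hleaf v)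
  have huinj : Function.Injective u := by
    intro v v' h
    have h1 : G.Adj (u v) v.1 := (hadj v).symm
    have h2 : G.Adj (u v) v'.1 := h ▸ (hadj v').symm
    exact Subtype.ext (leaf_adj_eq (hleaf v) h1 h2)
  have hdeg : ∀ v₀, (G.degree (u v₀) : ℝ) = 1 := by
    intro v₀; exact_mod_cast congrArg Nat.cast (leaf_degree_eq (hleaf v₀))
  set n := Fintype.card V with hn
  have hn1 : 1 ≤ (n : ℝ) := by exact_mod_cast Fintype.card_pos
  set t : ℝ := 1 / (2 * n) with ht
  have ht0 : 0 < t := by positivity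
  have ht1 : t < 1 := by
    rw [ht, div_lt_one (by positivity)]; linarith
  set ψ : ({v : V // IsPenultimate G v} → ℝ) → (V → ℝ) :=
    fun c w => ∑ v, c v * ((if w = u v then 1 else 0) + t * (if w = v.1 then 1 else 0))
    with hψ
  set U := (hA.eigenvectorUnitary : Matrix V V ℝ) with hU
  set φ : ({v : V // IsPenultimate G v} → ℝ) →ₗ[ℝ] ({i : V // hA.eigenvalues i < 1} → ℝ) :=
    { toFun := fun c i => (star U *ᵥ ψ c) i.1
      map_add' := by
        intro c c'
        funext i
        have hadd : ψ (c + c') = ψ c + ψ c' := by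
          funext w
          simp only [hψ, Pi.add_apply, add_mul, Finset.sum_add_distrib]
        rw [hadd, Matrix.mulVec_add]
        rfl
      map_smul' := by
        intro r c
        funext i
        have hsmul : ψ (r • c) = r • ψ c := by
          funext w
          simp only [hψ, Pi.smul_apply, smul_eq_mul, mul_assoc, ← Finset.mul_sum]
        rw [hsmul, Matrix.mulVec_smul]
        rfl } with hφ
  have hninj : ¬ Function.Injective φ := by
    intro hinj
    have h1 := LinearMap.finrank_le_finrank_of_injective hinj
    rw [Module.finrank_fintype_fun_eq_card, Module.finrank_fintype_fun_eq_card] at h1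
    rw [hp, hmu] at hlt
    omega
  obtain ⟨c₁, c₂, heq, hne⟩ := Function.not_injective_iff.mp hninj
  set c : {v : V // IsPenultimate G v} → ℝ := c₁ - c₂ with hc
  have hφc : φ c = 0 := by rw [hc, map_sub, heq, sub_self]
  have hcne : c ≠ 0 := sub_ne_zero.mpr hne
  set x : V → ℝ := ψ c with hx
  -- coordinates of x
  have hxu : ∀ v₀, x (u v₀) = c v₀ := by
    intro v₀
    simp only [hx, hψ]
    rw [Finset.sum_eq_single v₀]
    · simp [huNP v₀ v₀]
    · intro v _ hv
      have h1 : u v₀ ≠ u v := fun h => hv (huinj h).symm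
      simp [h1, huNP v₀ v]
    · intro h; exact absurd (Finset.mem_univ v₀) h
  have hxv : ∀ v₀, x v₀.1 = t * c v₀ := by
    intro v₀
    simp only [hx, hψ]
    rw [Finset.sum_eq_single v₀]
    · have h1 : (v₀.1 : V) ≠ u v₀ := fun h => huNP v₀ v₀ h.symm
      simp [h1]; ring
    · intro v _ hv
      have h1 : (v₀.1 : V) ≠ u v := fun h => huNP v v₀ h.symm
      have h2 : (v₀.1 : V) ≠ v.1 := fun h => hv (Subtype.ext h).symm
      simp [h1, h2]
    · intro h; exact absurd (Finset.mem_univ v₀) h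
  have hx0 : ∀ w, (∀ v, u v ≠ w) → (∀ v : {v : V // IsPenultimate G v}, v.1 ≠ w) → x w = 0 := by
    intro w h1 h2
    simp only [hx, hψ]
    refine Finset.sum_eq_zero fun v _ => ?_
    have k1 : w ≠ u v := fun h => h1 v h.symm
    have k2 : w ≠ v.1 := fun h => h2 v h.symm
    simp [k1, k2]
  -- auxiliary nonnegative weight functions
  set afun : V → ℝ := fun w => ∑ v, if w = u v then c v ^ 2 else 0 with ha
  set bfun : V → ℝ := fun w => ∑ v, if w = v.1 then c v ^ 2 else 0 with hb
  have ha_nonneg : ∀ w, 0 ≤ afun w := by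
    intro w
    refine Finset.sum_nonneg fun v _ => ?_
    split_ifs
    exacts [sq_nonneg _, le_rfl]
  have hb_nonneg : ∀ w, 0 ≤ bfun w := by
    intro w
    refine Finset.sum_nonneg fun v _ => ?_
    split_ifs
    exacts [sq_nonneg _, le_rfl]
  have hau : ∀ v₀, afun (u v₀) = c v₀ ^ 2 := by
    intro v₀
    simp only [ha]
    rw [Finset.sum_eq_single v₀]
    · simp
    · intro v _ hv
      have h1 : u v₀ ≠ u v := fun h => hv (huinj h).symm
      simp [h1]
    · intro h; exact absurd (Finset.mem_univ v₀) h
  have ha0 : ∀ w, (∀ v, u v ≠ w) → afun w = 0 := by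
    intro w h1
    refine Finset.sum_eq_zero fun v _ => ?_
    have : w ≠ u v := fun h => h1 v h.symm
    simp [this]
  have hbv : ∀ v₀, bfun v₀.1 = c v₀ ^ 2 := by
    intro v₀
    simp only [hb]
    rw [Finset.sum_eq_single v₀]
    · simp
    · intro v _ hv
      have h2 : (v₀.1 : V) ≠ v.1 := fun h => hv (Subtype.ext h).symm
      simp [h2]
    · intro h; exact absurd (Finset.mem_univ v₀) h
  have hb0 : ∀ w, (∀ v : {v : V // IsPenultimate G v}, v.1 ≠ w) → bfun w = 0 := by
    intro w h2
    refine Finset.sum_eq_zero fun v _ => ?_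
    have : w ≠ v.1 := fun h => h2 v h.symm
    simp [this]
  set σ : ℝ := ∑ v, c v ^ 2 with hσ
  have hσpos : 0 < σ := by
    obtain ⟨v, hv⟩ := Function.ne_iff.mp hcne
    refine Finset.sum_pos' (fun v _ => sq_nonneg _) ⟨v, Finset.mem_univ v, ?_⟩
    have hcv : c v ≠ 0 := hv
    positivity
  have hsum_a : ∑ w : V, afun w = σ := by
    simp only [ha, hσ]
    rw [Finset.sum_comm]
    simp [Finset.sum_ite_eq']
  have hsum_b : ∑ w : V, bfun w = σ := by
    simp only [hb, hσ]
    rw [Finset.sum_comm]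
    simp [Finset.sum_ite_eq']
  -- pointwise bound on edge terms
  have hpt : ∀ i j, G.Adj i j → (x i - x j)^2 ≤
      (1-t)^2 * afun i + (1-t)^2 * afun j + 2*t^2 * bfun i + 2*t^2 * bfun j := by
    intro i j hij
    by_cases hi : ∃ v, u v = i
    · obtain ⟨v, rfl⟩ := hi
      have hj : j = v.1 := leaf_adj_eq (hleaf v) hij (hadj v).symm
      subst hj
      rw [hxu v, hxv v, hau v]
      nlinarith [mul_nonneg (sq_nonneg (1-t)) (ha_nonneg v.1),
        mul_nonneg (sq_nonneg t) (hb_nonneg (u v)), mul_nonneg (sq_nonneg t) (hb_nonneg v.1)]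
    · by_cases hj : ∃ v, u v = j
      · obtain ⟨v, rfl⟩ := hj
        have hi2 : i = v.1 := leaf_adj_eq (hleaf v) hij.symm (hadj v).symm
        subst hi2
        rw [hxu v, hxv v, hau v]
        nlinarith [mul_nonneg (sq_nonneg (1-t)) (ha_nonneg v.1),
          mul_nonneg (sq_nonneg t) (hb_nonneg (u v)), mul_nonneg (sq_nonneg t) (hb_nonneg v.1)]
      · push_neg at hi hj
        have hxi : x i ^ 2 = t^2 * bfun i := by
          by_cases hvi : ∃ v : {v : V // IsPenultimate G v}, v.1 = i
          · obtain ⟨v, rfl⟩ := hvi; rw [hxv v, hbv v]; ring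
          · push_neg at hvi; rw [hx0 i hi hvi, hb0 i hvi]; ring
        have hxj : x j ^ 2 = t^2 * bfun j := by
          by_cases hvj : ∃ v : {v : V // IsPenultimate G v}, v.1 = j
          · obtain ⟨v, rfl⟩ := hvj; rw [hxv v, hbv v]; ring
          · push_neg at hvj; rw [hx0 j hj hvj, hb0 j hvj]; ring
        nlinarith [hxi, hxj, sq_nonneg (x i + x j), mul_nonneg (sq_nonneg (1-t)) (ha_nonneg i),
          mul_nonneg (sq_nonneg (1-t)) (ha_nonneg j)]
  -- the four double sums
  have hT1 : ∑ i : V, ∑ j : V, (if G.Adj i j then afun i else 0) = σ := by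
    have key : ∀ i, afun i * (G.degree i : ℝ) = afun i := by
      intro i
      by_cases hi : ∃ v, u v = i
      · obtain ⟨v, rfl⟩ := hi; rw [hdeg v, mul_one]
      · push_neg at hi; rw [ha0 i hi, zero_mul]
    have inner : ∀ i, (∑ j : V, if G.Adj i j then afun i else 0) = afun i := by
      intro i
      calc (∑ j : V, if G.Adj i j then afun i else 0)
          = afun i * ∑ j : V, (if G.Adj i j then (1:ℝ) else 0) := by
            rw [Finset.mul_sum]
            refine Finset.sum_congr rfl fun j _ => ?_
            by_cases h : G.Adj i j <;> simp [h]
        _ = afun i * (G.degree i : ℝ) := by rw [← SimpleGraph.degree_eq_sum_if_adj]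
        _ = afun i := key i
    rw [Finset.sum_congr rfl fun i _ => inner i, hsum_a]
  have hT2 : ∑ i : V, ∑ j : V, (if G.Adj i j then afun j else 0) = σ := by
    rw [Finset.sum_comm]
    have step : ∀ j i, (if G.Adj i j then afun j else 0) = (if G.Adj j i then afun j else 0) := by
      intro j i
      by_cases h : G.Adj i j
      · rw [if_pos h, if_pos h.symm]
      · rw [if_neg h, if_neg (fun h' => h h'.symm)]
    calc ∑ j : V, ∑ i : V, (if G.Adj i j then afun j else 0)
        = ∑ j : V, ∑ i : V, (if G.Adj j i then afun j else 0) := by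
          exact Finset.sum_congr rfl fun j _ => Finset.sum_congr rfl fun i _ => step j i
      _ = σ := hT1
  have hT3 : ∑ i : V, ∑ j : V, (if G.Adj i j then bfun i else 0) ≤ n * σ := by
    calc ∑ i : V, ∑ j : V, (if G.Adj i j then bfun i else 0)
        ≤ ∑ i : V, ∑ _j : V, bfun i := by
          refine Finset.sum_le_sum fun i _ => Finset.sum_le_sum fun j _ => ?_
          split_ifs
          exacts [le_rfl, hb_nonneg i]
      _ = n * σ := by
          simp only [Finset.sum_const, Finset.card_univ, nsmul_eq_mul, ← hn]
          rw [← Finset.mul_sum, hsum_b]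
  have hT4 : ∑ i : V, ∑ j : V, (if G.Adj i j then bfun j else 0) ≤ n * σ := by
    rw [Finset.sum_comm]
    calc ∑ j : V, ∑ i : V, (if G.Adj i j then bfun j else 0)
        ≤ ∑ j : V, ∑ _i : V, bfun j := by
          refine Finset.sum_le_sum fun j _ => Finset.sum_le_sum fun i _ => ?_
          split_ifs
          exacts [le_rfl, hb_nonneg j]
      _ = n * σ := by
          simp only [Finset.sum_const, Finset.card_univ, nsmul_eq_mul, ← hn]
          rw [← Finset.mul_sum, hsum_b]
  -- the full quadratic-form bound
  have hS : (∑ i : V, ∑ j : V, if G.Adj i j then (x i - x j)^2 else 0)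
      ≤ 2*(1-t)^2*σ + 4*n*t^2*σ := by
    have step1 : (∑ i : V, ∑ j : V, if G.Adj i j then (x i - x j)^2 else 0)
        ≤ ∑ i : V, ∑ j : V, ((1-t)^2 * (if G.Adj i j then afun i else 0)
            + (1-t)^2 * (if G.Adj i j then afun j else 0)
            + 2*t^2 * (if G.Adj i j then bfun i else 0)
            + 2*t^2 * (if G.Adj i j then bfun j else 0)) := by
      refine Finset.sum_le_sum fun i _ => Finset.sum_le_sum fun j _ => ?_
      by_cases h : G.Adj i j
      · simp only [if_pos h]
        exact hpt i j h
      · simp [h]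
    refine le_trans step1 ?_
    simp only [Finset.sum_add_distrib, ← Finset.mul_sum]
    rw [hT1, hT2]
    nlinarith [hT3, hT4, sq_nonneg t]
  -- lower bound on the norm
  have hxx : σ ≤ x ⬝ᵥ x := by
    rw [dotProduct, ← hsum_a]
    refine Finset.sum_le_sum fun w _ => ?_
    by_cases hw : ∃ v, u v = w
    · obtain ⟨v, rfl⟩ := hw
      rw [hau v, hxu v]
      nlinarith []
    · push_neg at hw
      rw [ha0 w hw]
      exact mul_self_nonneg _
  -- numeric conclusion
  have h2nt : 2 * (n:ℝ) * t^2 = t := by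
    rw [ht]; field_simp
  have h4nt : 4*(n:ℝ)*t^2*σ = 2*t*σ := by linear_combination 2*σ*h2nt
  have hQ : x ⬝ᵥ (G.lapMatrix ℝ *ᵥ x) < x ⬝ᵥ x := by
    rw [← Matrix.toLinearMap₂'_apply', SimpleGraph.lapMatrix_toLinearMap₂']
    have hfin : 2*(1-t)^2*σ + 4*(n:ℝ)*t^2*σ < 2 * σ := by
      rw [h4nt]
      nlinarith [mul_pos hσpos (mul_pos ht0 (sub_pos.mpr ht1))]
    linarith [hS, hxx]
  have hge : x ⬝ᵥ x ≤ x ⬝ᵥ (G.lapMatrix ℝ *ᵥ x) := by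
    refine aux_spectral hA x ?_
    intro i hi
    exact congrFun hφc ⟨i, hi⟩
  linarith
end

section
/- Let T be a finite tree containing four distinct vertices a, b, c, d such that ab, bc, cd are edges of T and both b and c have degree exactly 2 in T (a clean path of length three). Let T' be the graph on the vertex set V(T) \ {b, c, d} in which two vertices x, y are adjacent if and only if they are adjacent in T, or one of x, y equals a and the other is a neighbor of d in T different from c. Then γ(T) ≤ γ(T') + 1. -/
open SimpleGraph

/-- If `a-b-c-d` is a clean path of length three in a finite tree `T`
(`b` and `c` have degree exactly `2`), and `T'` is obtained from `T` by contracting this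
path, then `γ(T) ≤ γ(T') + 1`. -/
theorem domNum_contractCleanPath {V : Type*} [Fintype V] [DecidableEq V]
    (G : SimpleGraph V) (hT : G.IsTree) (a b c d : V)
    (hdist : a ≠ b ∧ a ≠ c ∧ a ≠ d ∧ b ≠ c ∧ b ≠ d ∧ c ≠ d)
    (hab : G.Adj a b) (hbc : G.Adj b c) (hcd : G.Adj c d)
    (hb : degNat G b = 2) (hc : degNat G c = 2) :
    domNum G ≤ domNum (contractCleanPath G a b c d) + 1 := by
  classical
  obtain ⟨hab1, hac1, had1, hbc1, hbd1, hcd1⟩ := hdist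
  -- the minimum dominating set of the contracted graph is attained
  have hSne : {n : ℕ | ∃ D : Finset {x : V // x ≠ b ∧ x ≠ c ∧ x ≠ d},
      IsDomSet (contractCleanPath G a b c d) D ∧ D.card = n}.Nonempty :=
    ⟨Finset.univ.card, Finset.univ, fun v => Or.inl (Finset.mem_univ v), rfl⟩
  obtain ⟨D', hD', hcard⟩ := Nat.sInf_mem hSne
  set DS : V → Finset V := fun w => insert w (D'.image Subtype.val) with hDS
  -- if some `DS w` with `w ∈ {b,c,d}` dominates `G`, we are done
  have key : ∀ w : V, (w = b ∨ w = c ∨ w = d) → IsDomSet G (DS w) →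
      domNum G ≤ domNum (contractCleanPath G a b c d) + 1 := by
    intro w hw hdom
    have hwnot : w ∉ D'.image Subtype.val := by
      simp only [Finset.mem_image]
      rintro ⟨x, -, hx⟩
      rcases hw with rfl | rfl | rfl
      · exact x.2.1 hx
      · exact x.2.2.1 hx
      · exact x.2.2.2 hx
    have hcard2 : (DS w).card = domNum (contractCleanPath G a b c d) + 1 := by
      rw [hDS]
      rw [Finset.card_insert_of_notMem hwnot,
        Finset.card_image_of_injective _ Subtype.val_injective, hcard, domNum]
    exact Nat.sInf_le ⟨DS w, hdom, hcard2⟩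
  -- membership of lifted vertices
  have hmemDS : ∀ (w : V) (u : {x : V // x ≠ b ∧ x ≠ c ∧ x ≠ d}), u ∈ D' → u.1 ∈ DS w := by
    intro w u hu
    exact Finset.mem_insert_of_mem (Finset.mem_image.mpr ⟨u, hu, rfl⟩)
  have hself : ∀ w : V, w ∈ DS w := fun w => Finset.mem_insert_self _ _
  -- generic domination lemma
  have hgen : ∀ w : V,
      (w = d ∨ (⟨a, hab1, hac1, had1⟩ : {x : V // x ≠ b ∧ x ≠ c ∧ x ≠ d}) ∉ D') →
      (a ∈ DS w ∨ ∃ z ∈ DS w, G.Adj z a) →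
      (b ∈ DS w ∨ ∃ z ∈ DS w, G.Adj z b) →
      (c ∈ DS w ∨ ∃ z ∈ DS w, G.Adj z c) →
      (d ∈ DS w ∨ ∃ z ∈ DS w, G.Adj z d) →
      IsDomSet G (DS w) := by
    intro w hcase hA hB hC hD
    intro v
    by_cases hvb : v = b
    · subst hvb; exact hB
    by_cases hvc : v = c
    · subst hvc; exact hC
    by_cases hvd : v = d
    · subst hvd; exact hD
    by_cases hva : v = a
    · subst hva; exact hA
    rcases hD' ⟨v, hvb, hvc, hvd⟩ with hvD | ⟨u, hu, huadj⟩
    · exact Or.inl (hmemDS w _ hvD)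
    · rw [contractCleanPath, SimpleGraph.fromRel_adj] at huadj
      obtain ⟨hne, hdisj⟩ := huadj
      rcases hdisj with (hGuv | ⟨hua, hdv⟩) | (hGvu | ⟨hva', _⟩)
      · exact Or.inr ⟨u.1, hmemDS w u hu, hGuv⟩
      · rcases hcase with rfl | haD
        · exact Or.inr ⟨w, hself w, hdv⟩
        · exact absurd ((Subtype.ext hua : u = ⟨a, hab1, hac1, had1⟩) ▸ hu) haD
      · exact Or.inr ⟨u.1, hmemDS w u hu, hGvu.symm⟩
      · exact absurd hva' hva
  -- main case analysis on how `a` is dominated in the contracted graph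
  by_cases haD : (⟨a, hab1, hac1, had1⟩ : {x : V // x ≠ b ∧ x ≠ c ∧ x ≠ d}) ∈ D'
  · -- `a ∈ D'`: take `D' ∪ {d}`
    refine key d (Or.inr (Or.inr rfl)) (hgen d (Or.inl rfl) ?_ ?_ ?_ ?_)
    · exact Or.inl (hmemDS d _ haD)
    · exact Or.inr ⟨a, hmemDS d _ haD, hab⟩
    · exact Or.inr ⟨d, hself d, hcd.symm⟩
    · exact Or.inl (hself d)
  · rcases hD' ⟨a, hab1, hac1, had1⟩ with h | ⟨u, hu, huadj⟩
    · exact absurd h haD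
    rw [contractCleanPath, SimpleGraph.fromRel_adj] at huadj
    obtain ⟨hne, hdisj⟩ := huadj
    have huna : u.1 ≠ a := fun h => hne (Subtype.ext h)
    have hmain : G.Adj u.1 a ∨ G.Adj d u.1 := by
      rcases hdisj with (h | ⟨h, _⟩) | (h | ⟨_, h⟩)
      · exact Or.inl h
      · exact absurd h huna
      · exact Or.inl h.symm
      · exact Or.inr h
    rcases hmain with hua | hdu
    · -- `a` dominated by a true neighbor: take `D' ∪ {c}`
      refine key c (Or.inr (Or.inl rfl)) (hgen c (Or.inr haD) ?_ ?_ ?_ ?_)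
      · exact Or.inr ⟨u.1, hmemDS c u hu, hua⟩
      · exact Or.inr ⟨c, hself c, hbc.symm⟩
      · exact Or.inl (hself c)
      · exact Or.inr ⟨c, hself c, hcd⟩
    · -- `a` dominated only through a neighbor of `d`: take `D' ∪ {b}`
      refine key b (Or.inl rfl) (hgen b (Or.inr haD) ?_ ?_ ?_ ?_)
      · exact Or.inr ⟨b, hself b, hab.symm⟩
      · exact Or.inl (hself b)
      · exact Or.inr ⟨b, hself b, hbc⟩
      · exact Or.inr ⟨u.1, hmemDS b u hu, hdu.symm⟩
end

section
/- Let T be a finite tree containing four distinct vertices a, b, c, d such that ab, bc, cd are edges of T and both b and c have degree exactly 2 in T (a clean path of length three), and let T' be the tree obtained from T by contracting this clean path, i.e., the graph on V(T) \ {b, c, d} in which x, y are adjacent if and only if they are adjacent in T, or one of x, y equals a and the other is a neighbor of d in T different from c. Then γ(T)·μ(T') ≤ γ(T')·μ(T); equivalently γ(T)/μ(T) ≤ γ(T')/μ(T'). -/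
open SimpleGraph

open Matrix Finset Module



open Matrix Finset Module

noncomputable section Sylv

variable {n : Type*} [Fintype n] [DecidableEq n]

/-- The subspace of vectors supported on `S`. -/
def coordSub (S : Finset n) : Submodule ℝ (n → ℝ) where
  carrier := {y | ∀ i ∉ S, y i = 0}
  add_mem' := by intro x y hx hy i hi; simp [hx i hi, hy i hi]
  zero_mem' := by intro i _; rfl
  smul_mem' := by intro c x hx i hi; simp [hx i hi]

lemma mem_coordSub {S : Finset n} {y : n → ℝ} : y ∈ coordSub S ↔ ∀ i ∉ S, y i = 0 := Iff.rfl

lemma finrank_coordSub (S : Finset n) : finrank ℝ (coordSub S) = S.card := by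
  classical
  have hker : coordSub S = LinearMap.ker (LinearMap.funLeft ℝ ℝ (Subtype.val : {i // i ∉ S} → n)) := by
    ext y
    simp only [mem_coordSub, LinearMap.mem_ker, LinearMap.funLeft_apply]
    constructor
    · intro h; funext i; exact h i.1 i.2
    · intro h i hi; exact congrFun h ⟨i, hi⟩
  have hsurj : Function.Surjective (LinearMap.funLeft ℝ ℝ (Subtype.val : {i // i ∉ S} → n)) :=
    LinearMap.funLeft_surjective_of_injective ℝ ℝ _ Subtype.val_injective
  have := LinearMap.finrank_range_add_finrank_ker
    (LinearMap.funLeft ℝ ℝ (Subtype.val : {i // i ∉ S} → n))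
  rw [LinearMap.range_eq_top.2 hsurj] at this
  have h1 : finrank ℝ (⊤ : Submodule ℝ ({i // i ∉ S} → ℝ)) = Fintype.card {i // i ∉ S} := by
    rw [finrank_top, Module.finrank_pi]
  have h2 : Fintype.card {i // i ∉ S} = Fintype.card n - S.card := by
    rw [Fintype.card_subtype_compl, Fintype.card_coe]
  have h3 : finrank ℝ (n → ℝ) = Fintype.card n := Module.finrank_pi ℝ
  have hle : S.card ≤ Fintype.card n := by
    simpa using Finset.card_le_card (Finset.subset_univ S)
  rw [hker] at *
  omega

variable {A : Matrix n n ℝ} (hA : A.IsHermitian)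

private def Uu (hA : A.IsHermitian) : Matrix n n ℝ := (hA.eigenvectorUnitary : Matrix n n ℝ)

lemma Uu_star_mul : star (Uu hA) * (Uu hA) = 1 := Unitary.coe_star_mul_self hA.eigenvectorUnitary

lemma Uu_mul_star : (Uu hA) * star (Uu hA) = 1 := Unitary.coe_mul_star_self hA.eigenvectorUnitary

lemma Uu_pair (y z : n → ℝ) : (Uu hA *ᵥ y) ⬝ᵥ (Uu hA *ᵥ z) = y ⬝ᵥ z := by
  rw [Matrix.dotProduct_mulVec, ← Matrix.mulVec_transpose, Matrix.mulVec_mulVec]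
  have : (Uu hA)ᵀ * (Uu hA) = 1 := by
    have := Uu_star_mul hA
    rwa [Matrix.star_eq_conjTranspose, Matrix.conjTranspose_eq_transpose_of_trivial] at this
  rw [this, Matrix.one_mulVec]

lemma Uu_inj : Function.Injective (fun y : n → ℝ => Uu hA *ᵥ y) := by
  intro y z h
  have h' : Uu hA *ᵥ y = Uu hA *ᵥ z := h
  have h2 : star (Uu hA) *ᵥ (Uu hA *ᵥ y) = star (Uu hA) *ᵥ (Uu hA *ᵥ z) := by rw [h']
  rwa [Matrix.mulVec_mulVec, Matrix.mulVec_mulVec, Uu_star_mul, Matrix.one_mulVec,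
    Matrix.one_mulVec] at h2

lemma Uu_quad (y : n → ℝ) :
    (Uu hA *ᵥ y) ⬝ᵥ (A *ᵥ (Uu hA *ᵥ y)) = ∑ i, hA.eigenvalues i * (y i)^2 := by
  have key : A * Uu hA = Uu hA * Matrix.diagonal hA.eigenvalues := by
    have h1 := congrArg (fun M : Matrix n n ℝ => M * Uu hA) hA.spectral_theorem
    simp only [Unitary.conjStarAlgAut_apply] at h1
    have h2 : (star (hA.eigenvectorUnitary : Matrix n n ℝ)) * Uu hA = 1 := Uu_star_mul hA
    rw [h1, Matrix.mul_assoc (_ * _), h2, Matrix.mul_one, RCLike.ofReal_real_eq_id,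
      Function.id_comp]
    rfl
  have hAU : A *ᵥ (Uu hA *ᵥ y) = Uu hA *ᵥ ((Matrix.diagonal hA.eigenvalues) *ᵥ y) := by
    rw [Matrix.mulVec_mulVec, key, ← Matrix.mulVec_mulVec]
  rw [hAU, Uu_pair]
  simp only [dotProduct, Matrix.mulVec_diagonal]
  congr 1; ext i; ring

lemma Uu_norm (y : n → ℝ) : (Uu hA *ᵥ y) ⬝ᵥ (Uu hA *ᵥ y) = ∑ i, (y i)^2 := by
  rw [Uu_pair]
  simp only [dotProduct]; congr 1; ext i; ring


lemma map_quad_lt (S : Finset n) (hS : ∀ i ∈ S, hA.eigenvalues i < 1) :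
    ∀ x ∈ (coordSub S).map (Matrix.mulVecLin (Uu hA)), x ≠ 0 → x ⬝ᵥ (A *ᵥ x) < x ⬝ᵥ x := by
  rintro x ⟨y, hy, rfl⟩ hx0
  have hy0 : y ≠ 0 := by rintro rfl; simp at hx0
  show (Uu hA *ᵥ y) ⬝ᵥ (A *ᵥ (Uu hA *ᵥ y)) < (Uu hA *ᵥ y) ⬝ᵥ (Uu hA *ᵥ y)
  rw [Uu_quad, Uu_norm]
  obtain ⟨i0, hi0⟩ : ∃ i, y i ≠ 0 := Function.ne_iff.mp hy0
  have hi0S : i0 ∈ S := by by_contra h; exact hi0 (hy i0 h)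
  have hsq : 0 < y i0 ^ 2 := lt_of_le_of_ne (sq_nonneg _) (Ne.symm (pow_ne_zero 2 hi0))
  apply Finset.sum_lt_sum
  · intro i _
    by_cases h : i ∈ S
    · have := hS i h; nlinarith [sq_nonneg (y i)]
    · rw [hy i h]; simp
  · exact ⟨i0, Finset.mem_univ _, by nlinarith [hS i0 hi0S]⟩

lemma map_quad_ge (S : Finset n) (hS : ∀ i ∈ S, 1 ≤ hA.eigenvalues i) :
    ∀ x ∈ (coordSub S).map (Matrix.mulVecLin (Uu hA)), x ⬝ᵥ x ≤ x ⬝ᵥ (A *ᵥ x) := by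
  rintro x ⟨y, hy, rfl⟩
  show (Uu hA *ᵥ y) ⬝ᵥ (Uu hA *ᵥ y) ≤ (Uu hA *ᵥ y) ⬝ᵥ (A *ᵥ (Uu hA *ᵥ y))
  rw [Uu_quad, Uu_norm]
  apply Finset.sum_le_sum
  intro i _
  by_cases h : i ∈ S
  · have := hS i h; nlinarith [sq_nonneg (y i)]
  · rw [hy i h]; simp

lemma finrank_map_Uu (S : Finset n) :
    finrank ℝ ((coordSub S).map (Matrix.mulVecLin (Uu hA))) = S.card := by
  rw [← finrank_coordSub S]
  exact (Submodule.equivMapOfInjective _ (Uu_inj hA) _).finrank_eq.symm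

lemma finrank_le_count (W : Submodule ℝ (n → ℝ))
    (hW : ∀ x ∈ W, x ≠ 0 → x ⬝ᵥ (A *ᵥ x) < x ⬝ᵥ x) :
    finrank ℝ W ≤ (univ.filter (fun i => hA.eigenvalues i < 1)).card := by
  set T := univ.filter (fun i => ¬ hA.eigenvalues i < 1) with hT
  set P := (coordSub T).map (Matrix.mulVecLin (Uu hA)) with hPdef
  have hP : ∀ x ∈ P, x ⬝ᵥ x ≤ x ⬝ᵥ (A *ᵥ x) := by
    apply map_quad_ge
    intro i hi
    rw [hT, Finset.mem_filter] at hi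
    exact not_lt.mp hi.2
  have hWP : W ⊓ P = ⊥ := by
    rw [Submodule.eq_bot_iff]
    intro x hx
    by_contra h0
    exact absurd (hW x hx.1 h0) (not_lt.2 (hP x hx.2))
  have hsum := Submodule.finrank_sup_add_finrank_inf_eq W P
  rw [hWP, finrank_bot, add_zero] at hsum
  have h1 : finrank ℝ P = T.card := finrank_map_Uu hA T
  have h2 : finrank ℝ ↥(W ⊔ P) ≤ Fintype.card n := by
    have h := Submodule.finrank_le (W ⊔ P)
    rwa [Module.finrank_pi] at h
  have h3 := Finset.card_filter_add_card_filter_not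
    (s := (univ : Finset n)) (p := fun i => hA.eigenvalues i < 1)
  rw [Finset.card_univ] at h3
  have h4 : (univ.filter (fun a => ¬ hA.eigenvalues a < 1)) = T := rfl
  rw [h4] at h3
  omega

lemma count_add_finrank_le (P : Submodule ℝ (n → ℝ))
    (hP : ∀ x ∈ P, x ⬝ᵥ x ≤ x ⬝ᵥ (A *ᵥ x)) :
    (univ.filter (fun i => hA.eigenvalues i < 1)).card + finrank ℝ P ≤ Fintype.card n := by
  classical
  set S := univ.filter (fun i => hA.eigenvalues i < 1) with hS
  set W := (coordSub S).map (Matrix.mulVecLin (Uu hA)) with hWdef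
  have hW : ∀ x ∈ W, x ≠ 0 → x ⬝ᵥ (A *ᵥ x) < x ⬝ᵥ x := by
    apply map_quad_lt
    intro i hi
    rw [hS, Finset.mem_filter] at hi
    exact hi.2
  have hWP : W ⊓ P = ⊥ := by
    rw [Submodule.eq_bot_iff]
    intro x hx
    by_contra h0
    exact absurd (hW x hx.1 h0) (not_lt.2 (hP x hx.2))
  have hsum := Submodule.finrank_sup_add_finrank_inf_eq W P
  rw [hWP, finrank_bot, add_zero] at hsum
  have h1 : finrank ℝ W = S.card := finrank_map_Uu hA S
  have h2 : finrank ℝ ↥(W ⊔ P) ≤ Fintype.card n := by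
    have h := Submodule.finrank_le (W ⊔ P)
    rwa [Module.finrank_pi] at h
  omega

lemma exists_negdef_subspace :
    ∃ W : Submodule ℝ (n → ℝ),
      finrank ℝ W = (univ.filter (fun i => hA.eigenvalues i < 1)).card ∧
      ∀ x ∈ W, x ≠ 0 → x ⬝ᵥ (A *ᵥ x) < x ⬝ᵥ x := by
  classical
  refine ⟨(coordSub (univ.filter (fun i => hA.eigenvalues i < 1))).map
    (Matrix.mulVecLin (Uu hA)), finrank_map_Uu hA _, map_quad_lt hA _ ?_⟩
  intro i hi
  rw [Finset.mem_filter] at hi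
  exact hi.2

end Sylv

section GraphPart
open SimpleGraph

variable {W : Type*} [Fintype W] [DecidableEq W]

lemma exists_min_domset (G : SimpleGraph W) :
    ∃ D : Finset W, IsDomSet G D ∧ D.card = domNum G := by
  have hne : {n : ℕ | ∃ D : Finset W, IsDomSet G D ∧ D.card = n}.Nonempty :=
    ⟨(univ : Finset W).card, univ, fun v => Or.inl (mem_univ v), rfl⟩
  exact Nat.sInf_mem hne

lemma domNum_le_card {G : SimpleGraph W} {D : Finset W} (hD : IsDomSet G D) :
    domNum G ≤ D.card :=
  Nat.sInf_le ⟨D, hD, rfl⟩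

lemma lap_quad (G : SimpleGraph W) [DecidableRel G.Adj] (x : W → ℝ) :
    x ⬝ᵥ (G.lapMatrix ℝ *ᵥ x) = (∑ i, ∑ j, if G.Adj i j then (x i - x j)^2 else 0) / 2 := by
  rw [← Matrix.toLinearMap₂'_apply', SimpleGraph.lapMatrix_toLinearMap₂']

lemma domset_quad (G : SimpleGraph W) [DecidableRel G.Adj] {D : Finset W} (hD : IsDomSet G D) :
    ∀ x ∈ coordSub Dᶜ, x ⬝ᵥ x ≤ x ⬝ᵥ (G.lapMatrix ℝ *ᵥ x) := by
  intro x hx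
  have hxD : ∀ i ∈ D, x i = 0 := fun i hi => hx i (by simp [hi])
  rw [lap_quad]
  have hch : ∀ v : W, v ∉ D → ∃ u, u ∈ D ∧ G.Adj u v := by
    intro v hv
    rcases hD v with h | ⟨u, hu, ha⟩
    · exact absurd h hv
    · exact ⟨u, hu, ha⟩
  choose u hu1 hu2 using hch
  set f : W × W → ℝ := fun p => if G.Adj p.1 p.2 then (x p.1 - x p.2)^2 else 0 with hf
  set g : W → W := fun v => if h : v ∈ D then v else u v h with hg
  have hgD : ∀ v ∈ Dᶜ, g v ∈ D := by
    intro v hv; rw [Finset.mem_compl] at hv; simp only [hg, dif_neg hv]; exact hu1 v hv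
  have hgAdj : ∀ v ∈ Dᶜ, G.Adj (g v) v := by
    intro v hv; rw [Finset.mem_compl] at hv; simp only [hg, dif_neg hv]; exact hu2 v hv
  set S : Finset (W × W) := (Dᶜ.image (fun v => (v, g v))) ∪ (Dᶜ.image (fun v => (g v, v)))
    with hS
  have hdisj : Disjoint (Dᶜ.image (fun v => (v, g v))) (Dᶜ.image (fun v => (g v, v))) := by
    rw [Finset.disjoint_left]
    rintro p hp1 hp2
    obtain ⟨v, hv, rfl⟩ := Finset.mem_image.mp hp1
    obtain ⟨w, hw, hpw⟩ := Finset.mem_image.mp hp2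
    have h1 : v ∈ Dᶜ := hv
    have h2 : g w ∈ D := hgD w hw
    have : g w = v := congrArg Prod.fst hpw
    rw [this] at h2
    exact (Finset.mem_compl.mp h1) h2
  have hsum1 : ∑ p ∈ Dᶜ.image (fun v => (v, g v)), f p = ∑ v ∈ Dᶜ, (x v)^2 := by
    rw [Finset.sum_image (by intro a _ b _ h; exact congrArg Prod.fst h)]
    apply Finset.sum_congr rfl
    intro v hv
    simp only [hf]
    rw [if_pos ((hgAdj v hv).symm), hxD _ (hgD v hv), sub_zero]
  have hsum2 : ∑ p ∈ Dᶜ.image (fun v => (g v, v)), f p = ∑ v ∈ Dᶜ, (x v)^2 := by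
    rw [Finset.sum_image (by intro a _ b _ h; exact congrArg Prod.snd h)]
    apply Finset.sum_congr rfl
    intro v hv
    simp only [hf]
    rw [if_pos (hgAdj v hv), hxD _ (hgD v hv), zero_sub, neg_sq]
  have hSle : ∑ p ∈ S, f p ≤ ∑ p ∈ univ ×ˢ univ, f p := by
    apply Finset.sum_le_sum_of_subset_of_nonneg (Finset.subset_univ S |>.trans (by simp))
    intro p _ _
    simp only [hf]
    positivity
  have hprod : ∑ p ∈ univ ×ˢ univ, f p = ∑ i, ∑ j, if G.Adj i j then (x i - x j)^2 else 0 := by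
    rw [Finset.sum_product]
  have hxx : x ⬝ᵥ x = ∑ v ∈ Dᶜ, (x v)^2 := by
    unfold dotProduct
    rw [← Finset.sum_subset (Finset.subset_univ Dᶜ)]
    · apply Finset.sum_congr rfl; intro v _; ring
    · intro v _ hv
      rw [hxD v (by simpa using hv)]
      ring
  have hStot : ∑ p ∈ S, f p = 2 * ∑ v ∈ Dᶜ, (x v)^2 := by
    rw [hS, Finset.sum_union hdisj, hsum1, hsum2]; ring
  rw [hxx]
  rw [← hprod]
  linarith [hSle, hStot]

lemma muNum_eq_card (G : SimpleGraph W) :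
    muNum G = (univ.filter (fun i =>
      letI := Classical.decRel G.Adj
      (SimpleGraph.posSemidef_lapMatrix ℝ G).isHermitian.eigenvalues i < 1)).card := by
  letI := Classical.decRel G.Adj
  unfold muNum
  rw [Nat.card_eq_fintype_card, Fintype.card_subtype]

lemma muNum_le_domNum (G : SimpleGraph W) : muNum G ≤ domNum G := by
  obtain ⟨D, hD, hcard⟩ := exists_min_domset G
  letI := Classical.decRel G.Adj
  have key := count_add_finrank_le (A := G.lapMatrix ℝ)
    (SimpleGraph.posSemidef_lapMatrix ℝ G).isHermitian (coordSub Dᶜ) (domset_quad G hD)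
  rw [finrank_coordSub] at key
  have h1 : Dᶜ.card = Fintype.card W - D.card := Finset.card_compl D
  have h2 : D.card ≤ Fintype.card W := Finset.card_le_univ D
  have h3 := muNum_eq_card G
  omega

end GraphPart

section TreeFacts
open SimpleGraph

variable {V : Type*} [Fintype V] [DecidableEq V]

lemma two_nbrs {G : SimpleGraph V} {v x y : V} (hdeg : degNat G v = 2)
    (hx : G.Adj v x) (hy : G.Adj v y) (hxy : x ≠ y) :
    ∀ u, G.Adj v u → u = x ∨ u = y := by
  classical
  intro u hu
  by_contra h
  push_neg at h
  obtain ⟨hux, huy⟩ := h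
  have hsub : ({x, y, u} : Finset V) ⊆ univ.filter (fun w => G.Adj v w) := by
    intro w hw
    simp only [Finset.mem_insert, Finset.mem_singleton] at hw
    rcases hw with rfl | rfl | rfl <;> simp [hx, hy, hu]
  have hcard : ({x, y, u} : Finset V).card = 3 := by
    rw [Finset.card_insert_of_notMem (by simp [hxy, Ne.symm hux]),
      Finset.card_insert_of_notMem (by simp [Ne.symm huy]), Finset.card_singleton]
  have h3 : 3 ≤ degNat G v := by
    rw [degNat, Nat.card_eq_fintype_card, Fintype.card_subtype]
    rw [← hcard]
    exact Finset.card_le_card hsub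
  omega

variable {G : SimpleGraph V} (hT : G.IsTree) {a b c d : V}
  (hdist : a ≠ b ∧ a ≠ c ∧ a ≠ d ∧ b ≠ c ∧ b ≠ d ∧ c ≠ d)
  (hab : G.Adj a b) (hbc : G.Adj b c) (hcd : G.Adj c d)
  (hb : degNat G b = 2) (hc : degNat G c = 2)

include hdist hab hbc hb in
lemma nbr_b : ∀ u, G.Adj b u → u = a ∨ u = c :=
  two_nbrs hb hab.symm hbc (fun h => hdist.2.1 h)

include hdist hbc hcd hc in
lemma nbr_c : ∀ u, G.Adj c u → u = b ∨ u = d :=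
  two_nbrs hc hbc.symm hcd (fun h => hdist.2.2.2.2.1 h)

include hdist hbc hcd hc in
lemma not_adj_ac : ¬ G.Adj a c := by
  intro h
  rcases nbr_c hdist hbc hcd hc a h.symm with h1 | h1
  · exact hdist.1 h1
  · exact hdist.2.2.1 h1

include hdist hab hbc hb in
lemma not_adj_bd : ¬ G.Adj b d := by
  intro h
  rcases nbr_b hdist hab hbc hb d h with h1 | h1
  · exact hdist.2.2.1 h1.symm
  · exact hdist.2.2.2.2.2 h1.symm

include hdist hab hbc hcd in
lemma pathABCD_isPath : (Walk.cons hab (Walk.cons hbc (Walk.cons hcd Walk.nil))).IsPath := by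
  obtain ⟨h1, h2, h3, h4, h5, h6⟩ := hdist
  simp [Walk.isPath_def, h1, h2, h3, h4, h5, h6]

include hT hdist hab hbc hcd in
lemma not_adj_ad : ¬ G.Adj a d := by
  intro h
  have hu := (SimpleGraph.isTree_iff_existsUnique_path.mp hT).2 a d
  obtain ⟨p, _, hp⟩ := hu
  have h1 := hp _ (pathABCD_isPath hdist hab hbc hcd)
  have h2 := hp (Walk.cons h Walk.nil) (by simp [Walk.isPath_def, hdist.2.2.1])
  have := congrArg Walk.support (h1.trans h2.symm)
  simp [Walk.support_cons] at this

include hT hdist hab hbc hcd hb hc in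
lemma no_common_nbr : ∀ u, G.Adj a u → G.Adj d u → False := by
  intro u hau hdu
  have hub : u ≠ b := by
    rintro rfl
    exact not_adj_bd hdist hab hbc hb hdu.symm
  have huc : u ≠ c := by
    rintro rfl
    exact not_adj_ac hdist hbc hcd hc hau
  have hua : u ≠ a := fun h => G.irrefl (h ▸ hau)
  have hud : u ≠ d := fun h => G.irrefl (h ▸ hdu)
  have hu := (SimpleGraph.isTree_iff_existsUnique_path.mp hT).2 a d
  obtain ⟨p, _, hp⟩ := hu
  have h1 := hp _ (pathABCD_isPath hdist hab hbc hcd)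
  have h2 := hp (Walk.cons hau (Walk.cons hdu.symm Walk.nil))
    (by simp [Walk.isPath_def, hdist.2.2.1, hua.symm, hud])
  have := congrArg Walk.support (h1.trans h2.symm)
  simp [Walk.support_cons] at this

end TreeFacts

section GammaPart
open SimpleGraph

variable {V : Type*} [Fintype V] [DecidableEq V]
  {G : SimpleGraph V} (hT : G.IsTree) {a b c d : V}
  (hdist : a ≠ b ∧ a ≠ c ∧ a ≠ d ∧ b ≠ c ∧ b ≠ d ∧ c ≠ d)
  (hab : G.Adj a b) (hbc : G.Adj b c) (hcd : G.Adj c d)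
  (hb : degNat G b = 2) (hc : degNat G c = 2)

include hT hdist hab hbc hcd hb hc in
lemma gamma_le : domNum G ≤ domNum (contractCleanPath G a b c d) + 1 := by
  obtain ⟨h1, h2, h3, h4, h5, h6⟩ := hdist
  set G' := contractCleanPath G a b c d with hG'
  obtain ⟨D', hD', hcard'⟩ := exists_min_domset G'
  have ha' : (a ≠ b ∧ a ≠ c ∧ a ≠ d) := ⟨h1, h2, h3⟩
  set a' : {x : V // x ≠ b ∧ x ≠ c ∧ x ≠ d} := ⟨a, ha'⟩ with ha'def
  have hadj' : ∀ (u : {x : V // x ≠ b ∧ x ≠ c ∧ x ≠ d}) (v : V)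
      (hv : v ≠ b ∧ v ≠ c ∧ v ≠ d), G'.Adj u ⟨v, hv⟩ →
      G.Adj u.1 v ∨ (u.1 = a ∧ G.Adj d v) ∨ (v = a ∧ G.Adj d u.1) := by
    intro u v hv h
    rw [hG', contractCleanPath, SimpleGraph.fromRel_adj] at h
    tauto
  have hDcard : ∀ w : V, (D'.image Subtype.val ∪ {w}).card ≤ domNum G' + 1 := by
    intro w
    calc (D'.image Subtype.val ∪ {w}).card ≤ (D'.image Subtype.val).card + ({w} : Finset V).card :=
          Finset.card_union_le _ _
      _ ≤ domNum G' + 1 := by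
          rw [Finset.card_image_of_injective _ Subtype.val_injective, hcard', Finset.card_singleton]
  have hmem : ∀ u : {x : V // x ≠ b ∧ x ≠ c ∧ x ≠ d}, u ∈ D' → ∀ w : V,
      u.1 ∈ D'.image Subtype.val ∪ {w} := by
    intro u hu w
    exact Finset.mem_union_left _ (Finset.mem_image_of_mem _ hu)
  -- generic vertices are dominated provided a' ∉ D' or d ∈ D-extra handled
  by_cases haD : a' ∈ D'
  · -- use D = image ∪ {d}
    set D : Finset V := D'.image Subtype.val ∪ {d} with hD
    have hdom : IsDomSet G D := by
      intro v
      by_cases hvb : v = b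
      · subst hvb
        exact Or.inr ⟨a, hmem a' haD d, hab⟩
      by_cases hvc : v = c
      · subst hvc
        exact Or.inr ⟨d, Finset.mem_union_right _ (Finset.mem_singleton_self d), hcd.symm⟩
      by_cases hvd : v = d
      · subst hvd
        exact Or.inl (Finset.mem_union_right _ (Finset.mem_singleton_self v))
      rcases hD' ⟨v, hvb, hvc, hvd⟩ with h | ⟨u, hu, hadj⟩
      · exact Or.inl (hmem _ h d)
      · rcases hadj' u v ⟨hvb, hvc, hvd⟩ hadj with h' | ⟨_, h'⟩ | ⟨hva, h'⟩
        · exact Or.inr ⟨u.1, hmem u hu d, h'⟩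
        · exact Or.inr ⟨d, Finset.mem_union_right _ (Finset.mem_singleton_self d), h'⟩
        · -- v = a, dominated by... a' ∈ D' so a ∈ D
          subst hva
          exact Or.inl (hmem a' haD d)
    calc domNum G ≤ D.card := domNum_le_card hdom
      _ ≤ domNum G' + 1 := hDcard d
  · -- a' ∉ D', find its dominator
    rcases hD' a' with h | ⟨u, hu, hadj⟩
    · exact absurd h haD
    have hu_ne : u.1 ≠ a := by
      intro h'
      apply haD
      have : u = a' := Subtype.ext h'
      rwa [this] at hu
    rcases hadj' u a ha' hadj with h' | ⟨hua, _⟩ | ⟨_, h'⟩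
    · -- G.Adj u a ; use D = image ∪ {c}
      set D : Finset V := D'.image Subtype.val ∪ {c} with hD
      have hdom : IsDomSet G D := by
        intro v
        by_cases hvb : v = b
        · subst hvb
          exact Or.inr ⟨c, Finset.mem_union_right _ (Finset.mem_singleton_self c), hbc.symm⟩
        by_cases hvc : v = c
        · subst hvc
          exact Or.inl (Finset.mem_union_right _ (Finset.mem_singleton_self v))
        by_cases hvd : v = d
        · subst hvd
          exact Or.inr ⟨c, Finset.mem_union_right _ (Finset.mem_singleton_self c), hcd⟩
        by_cases hva : v = a
        · subst hva
          exact Or.inr ⟨u.1, hmem u hu c, h'⟩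
        rcases hD' ⟨v, hvb, hvc, hvd⟩ with h | ⟨w, hw, hadj2⟩
        · exact Or.inl (hmem _ h c)
        · rcases hadj' w v ⟨hvb, hvc, hvd⟩ hadj2 with h'' | ⟨hwa, h''⟩ | ⟨hva2, h''⟩
          · exact Or.inr ⟨w.1, hmem w hw c, h''⟩
          · exfalso; apply haD
            have : w = a' := Subtype.ext hwa
            rwa [this] at hw
          · exact absurd hva2 hva
      calc domNum G ≤ D.card := domNum_le_card hdom
        _ ≤ domNum G' + 1 := hDcard c
    · exact absurd hua hu_ne
    · -- G.Adj d u ; use D = image ∪ {b}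
      set D : Finset V := D'.image Subtype.val ∪ {b} with hD
      have hdom : IsDomSet G D := by
        intro v
        by_cases hvb : v = b
        · subst hvb
          exact Or.inl (Finset.mem_union_right _ (Finset.mem_singleton_self v))
        by_cases hvc : v = c
        · subst hvc
          exact Or.inr ⟨b, Finset.mem_union_right _ (Finset.mem_singleton_self b), hbc⟩
        by_cases hvd : v = d
        · subst hvd
          exact Or.inr ⟨u.1, hmem u hu b, h'.symm⟩
        by_cases hva : v = a
        · subst hva
          exact Or.inr ⟨b, Finset.mem_union_right _ (Finset.mem_singleton_self b), hab.symm⟩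
        rcases hD' ⟨v, hvb, hvc, hvd⟩ with h | ⟨w, hw, hadj2⟩
        · exact Or.inl (hmem _ h b)
        · rcases hadj' w v ⟨hvb, hvc, hvd⟩ hadj2 with h'' | ⟨hwa, h''⟩ | ⟨hva2, h''⟩
          · exact Or.inr ⟨w.1, hmem w hw b, h''⟩
          · exfalso; apply haD
            have : w = a' := Subtype.ext hwa
            rwa [this] at hw
          · exact absurd hva2 hva
      calc domNum G ≤ D.card := domNum_le_card hdom
        _ ≤ domNum G' + 1 := hDcard b

end GammaPart

section MuStepDefs
open SimpleGraph

variable {V : Type*} [Fintype V] [DecidableEq V]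

/-- Vertices reachable from `a` by a walk avoiding `b` and `c`. -/
def Aside (G : SimpleGraph V) (a b c : V) : Set V :=
  {v | ∃ w : G.Walk a v, b ∉ w.support ∧ c ∉ w.support}

open Classical in
/-- Sign function: `1` on the `a`-side, `-1` elsewhere. -/
noncomputable def epsF (G : SimpleGraph V) (a b c : V) : V → ℝ :=
  fun v => if v ∈ Aside G a b c then 1 else -1

open Classical in
/-- The set of surviving neighbours of `d`. -/
noncomputable def NdF (G : SimpleGraph V) (b c d : V) :
    Finset {x : V // x ≠ b ∧ x ≠ c ∧ x ≠ d} :=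
  Finset.univ.filter (fun u => G.Adj d u.1)

/-- evaluation at a coordinate, as a linear map on pairs. -/
noncomputable def prjL (b c d : V) (u : {x : V // x ≠ b ∧ x ≠ c ∧ x ≠ d}) :
    ((({x : V // x ≠ b ∧ x ≠ c ∧ x ≠ d} → ℝ) × ℝ)) →ₗ[ℝ] ℝ :=
  (LinearMap.proj u).comp (LinearMap.fst ℝ ({x : V // x ≠ b ∧ x ≠ c ∧ x ≠ d} → ℝ) ℝ)

noncomputable def tauL (b c d : V) : ((({x : V // x ≠ b ∧ x ≠ c ∧ x ≠ d} → ℝ) × ℝ)) →ₗ[ℝ] ℝ :=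
  LinearMap.snd ℝ ({x : V // x ≠ b ∧ x ≠ c ∧ x ≠ d} → ℝ) ℝ

@[simp] lemma prjL_apply (b c d : V) (u : {x : V // x ≠ b ∧ x ≠ c ∧ x ≠ d})
    (x : {x : V // x ≠ b ∧ x ≠ c ∧ x ≠ d} → ℝ) (τ : ℝ) : prjL b c d u (x, τ) = x u := rfl

@[simp] lemma tauL_apply (b c d : V) (x : {x : V // x ≠ b ∧ x ≠ c ∧ x ≠ d} → ℝ) (τ : ℝ) :
    tauL b c d (x, τ) = τ := rfl

noncomputable def sigL (G : SimpleGraph V) (a b c d : V) (ha : a ≠ b ∧ a ≠ c ∧ a ≠ d) :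
    ((({x : V // x ≠ b ∧ x ≠ c ∧ x ≠ d} → ℝ) × ℝ)) →ₗ[ℝ] ℝ :=
  ∑ u ∈ NdF G b c d, (prjL b c d ⟨a, ha⟩ - prjL b c d u)

noncomputable def CL (G : SimpleGraph V) (a b c d : V) (ha : a ≠ b ∧ a ≠ c ∧ a ≠ d) :
    ((({x : V // x ≠ b ∧ x ≠ c ∧ x ≠ d} → ℝ) × ℝ)) →ₗ[ℝ] ℝ :=
  ((((NdF G b c d).card : ℝ) + 1)/2) • (tauL b c d) - sigL G a b c d ha

open Classical in
noncomputable def Emap (G : SimpleGraph V) (a b c d : V) (ha : a ≠ b ∧ a ≠ c ∧ a ≠ d) :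
    ((({x : V // x ≠ b ∧ x ≠ c ∧ x ≠ d} → ℝ) × ℝ)) →ₗ[ℝ] (V → ℝ) :=
  LinearMap.pi (fun v =>
    if hv : v ≠ b ∧ v ≠ c ∧ v ≠ d then
      epsF G a b c v • prjL b c d ⟨v, hv⟩
    else if v = d then tauL b c d - prjL b c d ⟨a, ha⟩
    else if v = c then CL G a b c d ha
    else prjL b c d ⟨a, ha⟩ + CL G a b c d ha)

variable {G : SimpleGraph V} {a b c d : V} (ha : a ≠ b ∧ a ≠ c ∧ a ≠ d)
  {x : {x : V // x ≠ b ∧ x ≠ c ∧ x ≠ d} → ℝ} {τ : ℝ}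

lemma sigL_apply (x : {x : V // x ≠ b ∧ x ≠ c ∧ x ≠ d} → ℝ) (τ : ℝ) :
    sigL G a b c d ha (x, τ) = ∑ u ∈ NdF G b c d, (x ⟨a, ha⟩ - x u) := by
  simp [sigL, LinearMap.sum_apply]

lemma CL_apply (x : {x : V // x ≠ b ∧ x ≠ c ∧ x ≠ d} → ℝ) (τ : ℝ) :
    CL G a b c d ha (x, τ) = ((((NdF G b c d).card : ℝ) + 1)/2) * τ
      - ∑ u ∈ NdF G b c d, (x ⟨a, ha⟩ - x u) := by
  simp [CL, sigL_apply]

lemma Emap_apply_mem (x : {x : V // x ≠ b ∧ x ≠ c ∧ x ≠ d} → ℝ) (τ : ℝ) (v : V)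
    (hv : v ≠ b ∧ v ≠ c ∧ v ≠ d) :
    Emap G a b c d ha (x, τ) v = epsF G a b c v * x ⟨v, hv⟩ := by
  simp [Emap, LinearMap.pi_apply, dif_pos hv]

lemma Emap_apply_d (hbd : b ≠ d) (hcd : c ≠ d) (x : {x : V // x ≠ b ∧ x ≠ c ∧ x ≠ d} → ℝ)
    (τ : ℝ) : Emap G a b c d ha (x, τ) d = τ - x ⟨a, ha⟩ := by
  have h : ¬ (d ≠ b ∧ d ≠ c ∧ d ≠ d) := by simp
  simp [Emap, LinearMap.pi_apply, dif_neg h]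

lemma Emap_apply_c (hbc : b ≠ c) (hcd : c ≠ d) (x : {x : V // x ≠ b ∧ x ≠ c ∧ x ≠ d} → ℝ)
    (τ : ℝ) : Emap G a b c d ha (x, τ) c = CL G a b c d ha (x, τ) := by
  have h : ¬ (c ≠ b ∧ c ≠ c ∧ c ≠ d) := by simp
  simp [Emap, LinearMap.pi_apply, dif_neg h, if_neg hcd, if_pos rfl]

lemma Emap_apply_b (hbc : b ≠ c) (hbd : b ≠ d) (x : {x : V // x ≠ b ∧ x ≠ c ∧ x ≠ d} → ℝ)
    (τ : ℝ) : Emap G a b c d ha (x, τ) b = x ⟨a, ha⟩ + CL G a b c d ha (x, τ) := by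
  have h : ¬ (b ≠ b ∧ b ≠ c ∧ b ≠ d) := by simp
  simp [Emap, LinearMap.pi_apply, dif_neg h, if_neg hbd, if_neg hbc]

lemma Emap_injective (hbc : b ≠ c) (hbd : b ≠ d) (hcd : c ≠ d) :
    Function.Injective (Emap G a b c d ha) := by
  rw [← LinearMap.ker_eq_bot]
  rw [Submodule.eq_bot_iff]
  rintro ⟨x, τ⟩ hmem
  rw [LinearMap.mem_ker] at hmem
  have hx : x = 0 := by
    funext u
    have := congrFun hmem u.1
    rw [Emap_apply_mem ha x τ u.1 u.2] at this
    simp only [Pi.zero_apply] at this ⊢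
    rcases mul_eq_zero.mp this with h | h
    · exfalso
      unfold epsF at h
      split_ifs at h <;> norm_num at h
    · convert h
  have hτ : τ = 0 := by
    have := congrFun hmem d
    rw [Emap_apply_d ha hbd hcd x τ] at this
    simp only [Pi.zero_apply] at this
    rw [hx] at this
    simpa using this
  simp [hx, hτ]

end MuStepDefs

section AsideFacts
open SimpleGraph

variable {V : Type*} [Fintype V] [DecidableEq V]
  {G : SimpleGraph V} (hT : G.IsTree) {a b c d : V}
  (hdist : a ≠ b ∧ a ≠ c ∧ a ≠ d ∧ b ≠ c ∧ b ≠ d ∧ c ≠ d)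
  (hab : G.Adj a b) (hbc : G.Adj b c) (hcd : G.Adj c d)
  (hb : degNat G b = 2) (hc : degNat G c = 2)

include hdist in
lemma aside_a : a ∈ Aside G a b c :=
  ⟨Walk.nil, by simp [Ne.symm hdist.1], by simp [Ne.symm hdist.2.1]⟩

lemma aside_closed {v y : V} (hv : v ∈ Aside G a b c) (hadj : G.Adj v y)
    (hyb : y ≠ b) (hyc : y ≠ c) : y ∈ Aside G a b c := by
  obtain ⟨w, hwb, hwc⟩ := hv
  refine ⟨w.concat hadj, ?_, ?_⟩ <;>
    simp [Walk.support_concat, List.concat_eq_append, hwb, hwc, Ne.symm hyb, Ne.symm hyc]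

lemma aside_not_b : b ∉ Aside G a b c := by
  rintro ⟨w, hwb, _⟩
  exact hwb (Walk.end_mem_support w)

lemma aside_not_c : c ∉ Aside G a b c := by
  rintro ⟨w, _, hwc⟩
  exact hwc (Walk.end_mem_support w)

include hT hdist hab hbc hcd in
lemma aside_not_d : d ∉ Aside G a b c := by
  rintro ⟨w, hwb, hwc⟩
  have hu := (SimpleGraph.isTree_iff_existsUnique_path.mp hT).2 a d
  obtain ⟨p, _, hp⟩ := hu
  have h1 := hp _ (pathABCD_isPath hdist hab hbc hcd)
  have h2 := hp w.bypass w.bypass_isPath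
  have heq := h1.trans h2.symm
  have hbmem : b ∈ (Walk.cons hab (Walk.cons hbc (Walk.cons hcd Walk.nil))).support := by
    simp [Walk.support_cons]
  rw [heq] at hbmem
  exact hwb (Walk.support_bypass_subset w hbmem)

include hT hdist hab hbc hcd hb hc in
lemma adj_d_not_aside {u : V} (hdu : G.Adj d u) (huc : u ≠ c) : u ∉ Aside G a b c := by
  intro huA
  have hub : u ≠ b := by
    rintro rfl
    exact not_adj_bd hdist hab hbc hb hdu.symm
  have hdb : d ≠ b := fun h => hdist.2.2.2.2.1 h.symm
  have hdc : d ≠ c := fun h => hdist.2.2.2.2.2 h.symm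
  exact aside_not_d hT hdist hab hbc hcd (aside_closed huA hdu.symm hdb hdc)

include hT hdist hab hbc hcd hb hc in
lemma eps_eq_of_adj {u w : V} (hu : u ≠ b ∧ u ≠ c) (hw : w ≠ b ∧ w ≠ c)
    (hadj : G.Adj u w) : epsF G a b c u = epsF G a b c w := by
  classical
  unfold epsF
  by_cases h1 : u ∈ Aside G a b c
  · rw [if_pos h1, if_pos (aside_closed h1 hadj hw.1 hw.2)]
  · rw [if_neg h1, if_neg (fun h2 => h1 (aside_closed h2 hadj.symm hu.1 hu.2))]

include hdist in
lemma eps_a : epsF G a b c a = 1 := by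
  classical
  unfold epsF
  rw [if_pos (aside_a hdist)]

include hT hdist hab hbc hcd hb hc in
lemma eps_d_nbr {u : V} (hdu : G.Adj d u) (huc : u ≠ c) : epsF G a b c u = -1 := by
  classical
  unfold epsF
  rw [if_neg (adj_d_not_aside hT hdist hab hbc hcd hb hc hdu huc)]

lemma eps_sq (v : V) : epsF G a b c v * epsF G a b c v = 1 := by
  classical
  unfold epsF
  split_ifs <;> norm_num

end AsideFacts

section KeyQuad
open SimpleGraph

lemma dot_self_eq {n : Type*} [Fintype n] (x : n → ℝ) : x ⬝ᵥ x = ∑ i, (x i)^2 := by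
  simp [dotProduct, sq]

lemma sq_swap (A B : ℝ) : (A - B)^2 = (B - A)^2 := by ring

variable {V : Type*} [Fintype V] [DecidableEq V]
  {G : SimpleGraph V} (hT : G.IsTree) {a b c d : V}
  (hdist : a ≠ b ∧ a ≠ c ∧ a ≠ d ∧ b ≠ c ∧ b ≠ d ∧ c ≠ d)
  (hab : G.Adj a b) (hbc : G.Adj b c) (hcd : G.Adj c d)
  (hb : degNat G b = 2) (hc : degNat G c = 2)

include hT hdist hab hbc hcd hb hc in
lemma key_quad [DecidableRel G.Adj] [DecidableRel (contractCleanPath G a b c d).Adj]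
    (x : {x : V // x ≠ b ∧ x ≠ c ∧ x ≠ d} → ℝ) (τ : ℝ) :
    (Emap G a b c d ⟨hdist.1, hdist.2.1, hdist.2.2.1⟩ (x, τ)) ⬝ᵥ
        (G.lapMatrix ℝ *ᵥ (Emap G a b c d ⟨hdist.1, hdist.2.1, hdist.2.2.1⟩ (x, τ)))
      - (Emap G a b c d ⟨hdist.1, hdist.2.1, hdist.2.2.1⟩ (x, τ)) ⬝ᵥ
        (Emap G a b c d ⟨hdist.1, hdist.2.1, hdist.2.2.1⟩ (x, τ))
    = (x ⬝ᵥ ((contractCleanPath G a b c d).lapMatrix ℝ *ᵥ x) - x ⬝ᵥ x) - τ^2 := by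
  classical
  have h1 : a ≠ b := hdist.1
  have h2 : a ≠ c := hdist.2.1
  have h3 : a ≠ d := hdist.2.2.1
  have h4 : b ≠ c := hdist.2.2.2.1
  have h5 : b ≠ d := hdist.2.2.2.2.1
  have h6 : c ≠ d := hdist.2.2.2.2.2
  set pa : a ≠ b ∧ a ≠ c ∧ a ≠ d := ⟨hdist.1, hdist.2.1, hdist.2.2.1⟩ with hpadef
  set a' : {x : V // x ≠ b ∧ x ≠ c ∧ x ≠ d} := ⟨a, pa⟩ with ha'def
  set y : V → ℝ := Emap G a b c d pa (x, τ) with hydef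
  set s : ℝ := x a' with hsdef
  set C : ℝ := CL G a b c d pa (x, τ) with hCdef
  set Nd : Finset {x : V // x ≠ b ∧ x ≠ c ∧ x ≠ d} := NdF G b c d with hNddef
  set k : ℝ := (Nd.card : ℝ) with hkdef
  set σ : ℝ := ∑ u ∈ Nd, (s - x u) with hσdef
  set Dsum : ℝ := ∑ u ∈ Nd, (s - x u)^2 with hDdef
  -- basic adjacency facts
  have hnbrb := nbr_b hdist hab hbc hb
  have hnbrc := nbr_c hdist hbc hcd hc
  have hnac := not_adj_ac hdist hbc hcd hc
  have hnbd := not_adj_bd hdist hab hbc hb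
  have hnad := not_adj_ad hT hdist hab hbc hcd
  have hnocom := no_common_nbr hT hdist hab hbc hcd hb hc
  -- coordinate values of y
  have hyb : y b = s + C := Emap_apply_b pa h4 h5 x τ
  have hyc : y c = C := Emap_apply_c pa h4 h6 x τ
  have hyd : y d = τ - s := Emap_apply_d pa h5 h6 x τ
  have hymem : ∀ (v : V) (hv : v ≠ b ∧ v ≠ c ∧ v ≠ d), y v = epsF G a b c v * x ⟨v, hv⟩ :=
    fun v hv => Emap_apply_mem pa x τ v hv
  have hya : y a = s := by
    rw [hymem a pa, eps_a hdist, one_mul]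
  have hC : C = ((k + 1)/2) * τ - σ := by
    rw [hCdef, CL_apply]
  have hNdeq : Finset.univ.filter (fun u : {x : V // x ≠ b ∧ x ≠ c ∧ x ≠ d} => G.Adj d u.1)
      = Nd := by
    ext u
    simp [hNddef, NdF]
  have hNdadj : ∀ u ∈ Nd, G.Adj d u.1 := by
    intro u hu
    rw [← hNdeq] at hu
    exact (Finset.mem_filter.mp hu).2
  -- the membership predicate
  have hfilternot : Finset.univ.filter (fun v => ¬ (v ≠ b ∧ v ≠ c ∧ v ≠ d)) = {b, c, d} := by
    ext v
    simp only [Finset.mem_filter, Finset.mem_univ, true_and, Finset.mem_insert,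
      Finset.mem_singleton]
    tauto
  -- (N) : the norm computation
  have hN : ∑ v : V, (y v)^2 = (∑ u, (x u)^2) + ((s + C)^2 + C^2 + (τ - s)^2) := by
    rw [← Finset.sum_filter_add_sum_filter_not Finset.univ (fun v => v ≠ b ∧ v ≠ c ∧ v ≠ d)
      (fun v => (y v)^2)]
    have e1 : ∑ v ∈ Finset.univ.filter (fun v => v ≠ b ∧ v ≠ c ∧ v ≠ d), (y v)^2
        = ∑ u : {x : V // x ≠ b ∧ x ≠ c ∧ x ≠ d}, (x u)^2 := by
      rw [Finset.sum_subtype (p := fun v => v ≠ b ∧ v ≠ c ∧ v ≠ d) (Finset.univ.filter _)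
        (by simp) (fun v => (y v)^2)]
      apply Finset.sum_congr rfl
      intro u _
      rw [hymem u.1 u.2, mul_pow]
      have h7 : epsF G a b c u.1 ^ 2 = 1 := by rw [sq]; exact eps_sq u.1
      rw [h7, one_mul, Subtype.coe_eta]
    have e2 : ∑ v ∈ Finset.univ.filter (fun v => ¬ (v ≠ b ∧ v ≠ c ∧ v ≠ d)), (y v)^2
        = (s + C)^2 + C^2 + (τ - s)^2 := by
      rw [hfilternot, Finset.sum_insert (by simp [h4, h5]), Finset.sum_insert (by simp [h6]),
        Finset.sum_singleton, hyb, hyc, hyd]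
      ring
    rw [e1, e2]
  -- gf : the "real edge" summand on the contracted vertex set
  set gf : {x : V // x ≠ b ∧ x ≠ c ∧ x ≠ d} → {x : V // x ≠ b ∧ x ≠ c ∧ x ≠ d} → ℝ :=
    fun u w => if G.Adj u.1 w.1 then (x u - x w)^2 else 0 with hgfdef
  set T1 : ℝ := ∑ u, ∑ w, gf u w with hT1def
  -- (T') : decomposition of the contracted quadratic form
  have hT'sum : (∑ u, ∑ w, if (contractCleanPath G a b c d).Adj u w then (x u - x w)^2 else 0)
      = T1 + 2 * Dsum := by
    have hpoint : ∀ u w : {x : V // x ≠ b ∧ x ≠ c ∧ x ≠ d},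
        (if (contractCleanPath G a b c d).Adj u w then (x u - x w)^2 else 0)
        = gf u w + ((if u.1 = a ∧ G.Adj d w.1 then (x u - x w)^2 else 0)
            + (if w.1 = a ∧ G.Adj d u.1 then (x u - x w)^2 else 0)) := by
      intro u w
      have hGadj : (contractCleanPath G a b c d).Adj u w ↔ u ≠ w ∧
          ((G.Adj u.1 w.1 ∨ (u.1 = a ∧ G.Adj d w.1)) ∨
           (G.Adj w.1 u.1 ∨ (w.1 = a ∧ G.Adj d u.1))) := by
        rw [contractCleanPath, SimpleGraph.fromRel_adj]
      by_cases hG : G.Adj u.1 w.1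
      · have hu1 : ¬ (u.1 = a ∧ G.Adj d w.1) := by
          rintro ⟨he, hdw⟩
          exact hnocom w.1 (he ▸ hG) hdw
        have hw1 : ¬ (w.1 = a ∧ G.Adj d u.1) := by
          rintro ⟨he, hdu⟩
          exact hnocom u.1 (he ▸ hG.symm) hdu
        have hadj2 : (contractCleanPath G a b c d).Adj u w := by
          rw [hGadj]
          exact ⟨fun h => (G.ne_of_adj hG) (congrArg Subtype.val h), Or.inl (Or.inl hG)⟩
        rw [if_pos hadj2, if_neg hu1, if_neg hw1]
        simp only [hgfdef, if_pos hG]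
        ring
      · by_cases hu1 : u.1 = a ∧ G.Adj d w.1
        · have hw1 : ¬ (w.1 = a ∧ G.Adj d u.1) := by
            rintro ⟨he, _⟩
            exact hnad (he ▸ hu1.2).symm
          have hne : u ≠ w := by
            rintro rfl
            exact hnad (hu1.1 ▸ hu1.2).symm
          have hadj2 : (contractCleanPath G a b c d).Adj u w := by
            rw [hGadj]
            exact ⟨hne, Or.inl (Or.inr hu1)⟩
          rw [if_pos hadj2, if_pos hu1, if_neg hw1]
          simp only [hgfdef, if_neg hG]
          ring
        · by_cases hw1 : w.1 = a ∧ G.Adj d u.1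
          · have hne : u ≠ w := by
              rintro rfl
              exact hnad (hw1.1 ▸ hw1.2).symm
            have hadj2 : (contractCleanPath G a b c d).Adj u w := by
              rw [hGadj]
              exact ⟨hne, Or.inr (Or.inr hw1)⟩
            rw [if_pos hadj2, if_neg hu1, if_pos hw1]
            simp only [hgfdef, if_neg hG]
            ring
          · have hadj2 : ¬ (contractCleanPath G a b c d).Adj u w := by
              rw [hGadj]
              rintro ⟨hne, (hx | hx) | (hx | hx)⟩
              · exact hG hx
              · exact hu1 hx
              · exact hG hx.symm
              · exact hw1 hx
            rw [if_neg hadj2, if_neg hu1, if_neg hw1]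
            simp only [hgfdef, if_neg hG]
            ring
    have hsplit : (∑ u, ∑ w, if (contractCleanPath G a b c d).Adj u w then (x u - x w)^2 else 0)
        = T1 + ((∑ u, ∑ w, if u.1 = a ∧ G.Adj d w.1 then (x u - x w)^2 else 0)
          + (∑ u, ∑ w, if w.1 = a ∧ G.Adj d u.1 then (x u - x w)^2 else 0)) := by
      rw [hT1def, ← Finset.sum_add_distrib, ← Finset.sum_add_distrib]
      apply Finset.sum_congr rfl; intro u _
      rw [← Finset.sum_add_distrib, ← Finset.sum_add_distrib]
      apply Finset.sum_congr rfl; intro w _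
      exact hpoint u w
    have hH1 : (∑ u, ∑ w, if u.1 = a ∧ G.Adj d w.1 then (x u - x w)^2 else 0) = Dsum := by
      rw [Finset.sum_eq_single_of_mem a' (Finset.mem_univ a')]
      · rw [hDdef, ← hNdeq, Finset.sum_filter]
        apply Finset.sum_congr rfl
        intro w _
        simp only [ha'def, true_and, ← hsdef]; rfl
      · intro u _ hu
        apply Finset.sum_eq_zero
        intro w _
        rw [if_neg]
        rintro ⟨he, _⟩
        exact hu (Subtype.ext he)
    have hH2 : (∑ u, ∑ w, if w.1 = a ∧ G.Adj d u.1 then (x u - x w)^2 else 0) = Dsum := by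
      have e : ∀ u : {x : V // x ≠ b ∧ x ≠ c ∧ x ≠ d},
          (∑ w, if w.1 = a ∧ G.Adj d u.1 then (x u - x w)^2 else 0)
          = if G.Adj d u.1 then (x u - s)^2 else 0 := by
        intro u
        rw [Finset.sum_eq_single_of_mem a' (Finset.mem_univ a')]
        · simp only [ha'def, true_and, ← hsdef]; rfl
        · intro w _ hw
          rw [if_neg]
          rintro ⟨he, _⟩
          exact hw (Subtype.ext he)
      rw [Finset.sum_congr rfl (fun u _ => e u), hDdef, ← hNdeq, Finset.sum_filter]
      apply Finset.sum_congr rfl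
      intro u _
      by_cases hdu : G.Adj d u.1
      · rw [if_pos hdu, if_pos hdu, sq_swap]
      · rw [if_neg hdu, if_neg hdu]
    rw [hsplit, hH1, hH2]
    ring
  -- (T) : the V-side sum
  set fT : V → V → ℝ := fun i j => if G.Adj i j then (y i - y j)^2 else 0 with hfTdef
  set SD : ℝ := ∑ u ∈ Nd, (y d - y u.1)^2 with hSDdef
  have hT1V : ∑ i ∈ Finset.univ.filter (fun v => v ≠ b ∧ v ≠ c ∧ v ≠ d),
      ∑ j ∈ Finset.univ.filter (fun v => v ≠ b ∧ v ≠ c ∧ v ≠ d), fT i j = T1 := by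
    rw [Finset.sum_subtype (p := fun v => v ≠ b ∧ v ≠ c ∧ v ≠ d) _ (by simp)
      (fun i => ∑ j ∈ Finset.univ.filter (fun v => v ≠ b ∧ v ≠ c ∧ v ≠ d), fT i j)]
    rw [hT1def]
    apply Finset.sum_congr rfl
    intro u _
    rw [Finset.sum_subtype (p := fun v => v ≠ b ∧ v ≠ c ∧ v ≠ d) _ (by simp)
      (fun j => fT u.1 j)]
    apply Finset.sum_congr rfl
    intro w _
    simp only [hfTdef, hgfdef]
    by_cases hG : G.Adj u.1 w.1
    · rw [if_pos hG, if_pos hG, hymem u.1 u.2, hymem w.1 w.2, Subtype.coe_eta, Subtype.coe_eta]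
      have he : epsF G a b c u.1 = epsF G a b c w.1 :=
        eps_eq_of_adj hT hdist hab hbc hcd hb hc ⟨u.2.1, u.2.2.1⟩ ⟨w.2.1, w.2.2.1⟩ hG
      rw [← he]
      have h8 : epsF G a b c u.1 * x u - epsF G a b c u.1 * x w
          = epsF G a b c u.1 * (x u - x w) := by ring
      rw [h8, mul_pow]
      have h7 : epsF G a b c u.1 ^ 2 = 1 := by rw [sq]; exact eps_sq u.1
      rw [h7, one_mul]
    · rw [if_neg hG, if_neg hG]
  have hrowb : ∑ j : V, fT b j = (y b - y a)^2 + (y b - y c)^2 := by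
    have hfb : Finset.univ.filter (fun j => G.Adj b j) = {a, c} := by
      ext j
      simp only [Finset.mem_filter, Finset.mem_univ, true_and, Finset.mem_insert,
        Finset.mem_singleton]
      constructor
      · exact hnbrb j
      · rintro (rfl | rfl)
        · exact hab.symm
        · exact hbc
    calc ∑ j : V, fT b j = ∑ j ∈ Finset.univ.filter (fun j => G.Adj b j), (y b - y j)^2 := by
          rw [Finset.sum_filter]
      _ = _ := by rw [hfb, Finset.sum_insert (by simp [h2]), Finset.sum_singleton]
  have hrowc : ∑ j : V, fT c j = (y c - y b)^2 + (y c - y d)^2 := by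
    have hfc : Finset.univ.filter (fun j => G.Adj c j) = {b, d} := by
      ext j
      simp only [Finset.mem_filter, Finset.mem_univ, true_and, Finset.mem_insert,
        Finset.mem_singleton]
      constructor
      · exact hnbrc j
      · rintro (rfl | rfl)
        · exact hbc.symm
        · exact hcd
    calc ∑ j : V, fT c j = ∑ j ∈ Finset.univ.filter (fun j => G.Adj c j), (y c - y j)^2 := by
          rw [Finset.sum_filter]
      _ = _ := by rw [hfc, Finset.sum_insert (by simp [h5]), Finset.sum_singleton]
  have hSDconv : ∑ j ∈ Finset.univ.filter (fun j => (j ≠ b ∧ j ≠ c ∧ j ≠ d) ∧ G.Adj d j),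
      (y d - y j)^2 = SD := by
    rw [← Finset.filter_filter, Finset.sum_filter,
      Finset.sum_subtype (p := fun v => v ≠ b ∧ v ≠ c ∧ v ≠ d) _ (by simp)
        (fun j => if G.Adj d j then (y d - y j)^2 else 0),
      ← Finset.sum_filter, hNdeq, hSDdef]
  have hrowd : ∑ j : V, fT d j = (y d - y c)^2 + SD := by
    have hfd : Finset.univ.filter (fun j => G.Adj d j)
        = insert c (Finset.univ.filter (fun j => (j ≠ b ∧ j ≠ c ∧ j ≠ d) ∧ G.Adj d j)) := by
      ext j
      simp only [Finset.mem_filter, Finset.mem_univ, true_and, Finset.mem_insert]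
      constructor
      · intro hdj
        by_cases hjc : j = c
        · exact Or.inl hjc
        · refine Or.inr ⟨⟨?_, hjc, ?_⟩, hdj⟩
          · rintro rfl; exact hnbd hdj.symm
          · rintro rfl; exact G.irrefl hdj
      · rintro (rfl | ⟨_, hdj⟩)
        · exact hcd.symm
        · exact hdj
    calc ∑ j : V, fT d j = ∑ j ∈ Finset.univ.filter (fun j => G.Adj d j), (y d - y j)^2 := by
          rw [Finset.sum_filter]
      _ = (y d - y c)^2 + SD := by
          rw [hfd, Finset.sum_insert (by simp), hSDconv]
  have hcolb : ∑ i ∈ Finset.univ.filter (fun v => v ≠ b ∧ v ≠ c ∧ v ≠ d), fT i b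
      = (y a - y b)^2 := by
    rw [Finset.sum_eq_single_of_mem a (by simp [h1, h2, h3])]
    · simp only [hfTdef]
      rw [if_pos hab]
    · intro i hi hia
      simp only [hfTdef]
      rw [if_neg]
      intro hadj
      rcases hnbrb i hadj.symm with rfl | rfl
      · exact hia rfl
      · exact (Finset.mem_filter.mp hi).2.2.1 rfl
  have hcolc : ∑ i ∈ Finset.univ.filter (fun v => v ≠ b ∧ v ≠ c ∧ v ≠ d), fT i c = 0 := by
    apply Finset.sum_eq_zero
    intro i hi
    simp only [hfTdef]
    rw [if_neg]
    intro hadj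
    rcases hnbrc i hadj.symm with rfl | rfl
    · exact (Finset.mem_filter.mp hi).2.1 rfl
    · exact (Finset.mem_filter.mp hi).2.2.2 rfl
  have hcold : ∑ i ∈ Finset.univ.filter (fun v => v ≠ b ∧ v ≠ c ∧ v ≠ d), fT i d = SD := by
    rw [Finset.sum_subtype (p := fun v => v ≠ b ∧ v ≠ c ∧ v ≠ d) _ (by simp) (fun i => fT i d)]
    rw [hSDdef, ← hNdeq, Finset.sum_filter]
    apply Finset.sum_congr rfl
    intro u _
    simp only [hfTdef]
    by_cases hdu : G.Adj d u.1
    · rw [if_pos hdu.symm, if_pos hdu, sq_swap]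
    · rw [if_neg (fun h => hdu h.symm), if_neg hdu]
  have hTT : ∑ i : V, ∑ j : V, fT i j
      = T1 + 2*((y a - y b)^2 + (y b - y c)^2 + (y c - y d)^2) + 2*SD := by
    rw [← Finset.sum_filter_add_sum_filter_not Finset.univ (fun v => v ≠ b ∧ v ≠ c ∧ v ≠ d)
      (fun i => ∑ j, fT i j)]
    have hsplitrow : ∀ i ∈ Finset.univ.filter (fun v => v ≠ b ∧ v ≠ c ∧ v ≠ d),
        (∑ j, fT i j) = (∑ j ∈ Finset.univ.filter (fun v => v ≠ b ∧ v ≠ c ∧ v ≠ d), fT i j)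
          + fT i b + fT i c + fT i d := by
      intro i _
      rw [← Finset.sum_filter_add_sum_filter_not Finset.univ (fun v => v ≠ b ∧ v ≠ c ∧ v ≠ d)
        (fT i), hfilternot, Finset.sum_insert (by simp [h4, h5]),
        Finset.sum_insert (by simp [h6]), Finset.sum_singleton]
      ring
    have hA : ∑ i ∈ Finset.univ.filter (fun v => v ≠ b ∧ v ≠ c ∧ v ≠ d), ∑ j, fT i j
        = T1 + (y a - y b)^2 + 0 + SD := by
      rw [Finset.sum_congr rfl hsplitrow, Finset.sum_add_distrib, Finset.sum_add_distrib,
        Finset.sum_add_distrib, hT1V, hcolb, hcolc, hcold]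
    have hB : ∑ i ∈ Finset.univ.filter (fun v => ¬ (v ≠ b ∧ v ≠ c ∧ v ≠ d)), ∑ j, fT i j
        = ((y b - y a)^2 + (y b - y c)^2) + (((y c - y b)^2 + (y c - y d)^2)
          + ((y d - y c)^2 + SD)) := by
      rw [hfilternot, Finset.sum_insert (by simp [h4, h5]), Finset.sum_insert (by simp [h6]),
        Finset.sum_singleton, hrowb, hrowc, hrowd]
    rw [hA, hB, sq_swap (y b) (y a), sq_swap (y c) (y b), sq_swap (y d) (y c)]
    ring
  have hSDval : SD = Dsum - 2*τ*σ + k*τ^2 := by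
    rw [hSDdef]
    have e : ∀ u ∈ Nd, (y d - y u.1)^2 = (s - x u)^2 - 2*τ*(s - x u) + τ^2 := by
      intro u hu
      have hdu := hNdadj u hu
      have h8 : y u.1 = epsF G a b c u.1 * x ⟨u.1, u.2⟩ := hymem u.1 u.2
      have h9 : epsF G a b c u.1 = -1 := eps_d_nbr hT hdist hab hbc hcd hb hc hdu u.2.2.1
      rw [hyd, h8, h9, Subtype.coe_eta]
      ring
    rw [Finset.sum_congr rfl e, Finset.sum_add_distrib, Finset.sum_sub_distrib,
      ← Finset.mul_sum, Finset.sum_const, nsmul_eq_mul, ← hσdef, ← hDdef]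
  -- final assembly
  rw [lap_quad, lap_quad, dot_self_eq y, dot_self_eq x, hN]
  have hTT' := hTT
  simp only [hfTdef] at hTT'
  rw [hTT', hT'sum, hSDval, hya, hyb, hyc, hyd, hC]
  ring

end KeyQuad

section MuStep
open SimpleGraph

variable {V : Type*} [Fintype V] [DecidableEq V]
  {G : SimpleGraph V} (hT : G.IsTree) {a b c d : V}
  (hdist : a ≠ b ∧ a ≠ c ∧ a ≠ d ∧ b ≠ c ∧ b ≠ d ∧ c ≠ d)
  (hab : G.Adj a b) (hbc : G.Adj b c) (hcd : G.Adj c d)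
  (hb : degNat G b = 2) (hc : degNat G c = 2)

include hT hdist hab hbc hcd hb hc in
lemma mu_step : muNum (contractCleanPath G a b c d) + 1 ≤ muNum G := by
  letI instG : DecidableRel G.Adj := Classical.decRel G.Adj
  letI instG' : DecidableRel (contractCleanPath G a b c d).Adj :=
    Classical.decRel (contractCleanPath G a b c d).Adj
  have pa : a ≠ b ∧ a ≠ c ∧ a ≠ d := ⟨hdist.1, hdist.2.1, hdist.2.2.1⟩
  obtain ⟨W', hWrank, hWneg⟩ := exists_negdef_subspace
    (A := (contractCleanPath G a b c d).lapMatrix ℝ)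
    (SimpleGraph.posSemidef_lapMatrix ℝ _).isHermitian
  set E := Emap G a b c d pa with hEdef
  have hEinj : Function.Injective E :=
    Emap_injective pa hdist.2.2.2.1 hdist.2.2.2.2.1 hdist.2.2.2.2.2
  set E1 := E.comp (LinearMap.inl ℝ ({x : V // x ≠ b ∧ x ≠ c ∧ x ≠ d} → ℝ) ℝ) with hE1def
  have hE1inj : Function.Injective E1 := by
    intro u v h
    have h2 : ((u, 0) : ({x : V // x ≠ b ∧ x ≠ c ∧ x ≠ d} → ℝ) × ℝ) = (v, 0) := hEinj h
    exact congrArg Prod.fst h2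
  set U1 : Submodule ℝ (V → ℝ) := W'.map E1 with hU1def
  set w0 : V → ℝ := E (0, 1) with hw0def
  set U : Submodule ℝ (V → ℝ) := U1 ⊔ (Submodule.span ℝ {w0}) with hUdef
  have hUmem : ∀ z ∈ U, ∃ x ∈ W', ∃ τ : ℝ, z = E (x, τ) := by
    intro z hz
    rw [hUdef, Submodule.mem_sup] at hz
    obtain ⟨z1, hz1, z2, hz2, rfl⟩ := hz
    rw [hU1def] at hz1
    obtain ⟨x, hx, rfl⟩ := Submodule.mem_map.mp hz1
    obtain ⟨τ, rfl⟩ := Submodule.mem_span_singleton.mp hz2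
    refine ⟨x, hx, τ, ?_⟩
    rw [hE1def, LinearMap.comp_apply, LinearMap.inl_apply, hw0def, ← _root_.map_smul, ← map_add]
    congr 1
    simp [Prod.ext_iff]
  have hUneg : ∀ z ∈ U, z ≠ 0 → z ⬝ᵥ (G.lapMatrix ℝ *ᵥ z) < z ⬝ᵥ z := by
    intro z hz hz0
    obtain ⟨x, hx, τ, rfl⟩ := hUmem z hz
    have hkey : (E (x, τ)) ⬝ᵥ (G.lapMatrix ℝ *ᵥ (E (x, τ))) - (E (x, τ)) ⬝ᵥ (E (x, τ))
        = (x ⬝ᵥ ((contractCleanPath G a b c d).lapMatrix ℝ *ᵥ x) - x ⬝ᵥ x) - τ^2 :=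
      key_quad hT hdist hab hbc hcd hb hc x τ
    by_cases hx0 : x = 0
    · have hτ : τ ≠ 0 := by
        rintro rfl
        apply hz0
        rw [hx0]
        exact map_zero E
      subst hx0
      have h0 : (0 : {x : V // x ≠ b ∧ x ≠ c ∧ x ≠ d} → ℝ) ⬝ᵥ
          ((contractCleanPath G a b c d).lapMatrix ℝ *ᵥ 0) = 0 := by simp
      have h0' : (0 : {x : V // x ≠ b ∧ x ≠ c ∧ x ≠ d} → ℝ) ⬝ᵥ
          (0 : {x : V // x ≠ b ∧ x ≠ c ∧ x ≠ d} → ℝ) = 0 := by simp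
      rw [h0, h0'] at hkey
      have hsq : 0 < τ^2 := lt_of_le_of_ne (sq_nonneg τ) (Ne.symm (pow_ne_zero 2 hτ))
      nlinarith [hkey]
    · have hlt := hWneg x hx hx0
      nlinarith [hkey, sq_nonneg τ]
  have hinf : U1 ⊓ Submodule.span ℝ {w0} = ⊥ := by
    rw [Submodule.eq_bot_iff]
    intro z hz
    obtain ⟨hz1, hz2⟩ := Submodule.mem_inf.mp hz
    obtain ⟨x, _, rfl⟩ := Submodule.mem_map.mp hz1
    obtain ⟨τ, hτ⟩ := Submodule.mem_span_singleton.mp hz2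
    have heq : E (x, 0) = E (0, τ) := by
      rw [show E (x, 0) = E1 x from rfl, ← hτ, hw0def, ← _root_.map_smul]
      congr 1
      simp [Prod.ext_iff]
    have h2 := hEinj heq
    have hx0 : x = 0 := congrArg Prod.fst h2
    rw [hx0]
    exact map_zero E1
  have hrankU : finrank ℝ U = finrank ℝ W' + 1 := by
    have h := Submodule.finrank_sup_add_finrank_inf_eq U1 (Submodule.span ℝ {w0})
    rw [hinf, finrank_bot, add_zero] at h
    have hU1rank : finrank ℝ U1 = finrank ℝ W' :=
      (Submodule.equivMapOfInjective E1 hE1inj W').finrank_eq.symm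
    have hw0ne : w0 ≠ 0 := by
      rw [hw0def]
      intro h0
      have := hEinj (h0.trans (map_zero E).symm)
      simpa [Prod.ext_iff] using this
    have hspan : finrank ℝ (Submodule.span ℝ {w0}) = 1 := finrank_span_singleton hw0ne
    rw [hUdef, h, hU1rank, hspan]
  have hcount := finrank_le_count (A := G.lapMatrix ℝ)
    (SimpleGraph.posSemidef_lapMatrix ℝ G).isHermitian U hUneg
  have hmuG := muNum_eq_card G
  have hmuG' := muNum_eq_card (contractCleanPath G a b c d)
  omega
end MuStep

/-- If `a-b-c-d` is a clean path of length three in a finite tree `T`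
(`b` and `c` have degree exactly `2`), and `T'` is obtained from `T` by contracting this
path, then `γ(T)·μ(T') ≤ γ(T')·μ(T)`, i.e. `γ(T)/μ(T) ≤ γ(T')/μ(T')`. -/
theorem ratio_contractCleanPath {V : Type*} [Fintype V] [DecidableEq V]
    (G : SimpleGraph V) (hT : G.IsTree) (a b c d : V)
    (hdist : a ≠ b ∧ a ≠ c ∧ a ≠ d ∧ b ≠ c ∧ b ≠ d ∧ c ≠ d)
    (hab : G.Adj a b) (hbc : G.Adj b c) (hcd : G.Adj c d)
    (hb : degNat G b = 2) (hc : degNat G c = 2) :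
    domNum G * muNum (contractCleanPath G a b c d) ≤
      domNum (contractCleanPath G a b c d) * muNum G := by
  have hγ := gamma_le hT hdist hab hbc hcd hb hc
  have hμ' := muNum_le_domNum (contractCleanPath G a b c d)
  have hstep := mu_step hT hdist hab hbc hcd hb hc
  calc domNum G * muNum (contractCleanPath G a b c d)
      ≤ (domNum (contractCleanPath G a b c d) + 1) * muNum (contractCleanPath G a b c d) :=
        Nat.mul_le_mul_right _ hγ
    _ = domNum (contractCleanPath G a b c d) * muNum (contractCleanPath G a b c d)
        + muNum (contractCleanPath G a b c d) := by ring
    _ ≤ domNum (contractCleanPath G a b c d) * muNum (contractCleanPath G a b c d)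
        + domNum (contractCleanPath G a b c d) := Nat.add_le_add_left hμ' _
    _ = domNum (contractCleanPath G a b c d) * (muNum (contractCleanPath G a b c d) + 1) := by
        ring
    _ ≤ domNum (contractCleanPath G a b c d) * muNum G := Nat.mul_le_mul_left _ hstep
end

section
/- Let k ≥ 3 be an integer and let T be a finite tree on at least 3 vertices in which every deep vertex has degree at least k. Then γ(T) < (1 + 1/((k−2)(k+1)))·p(T); equivalently, (k−2)(k+1)·γ(T) < ((k−2)(k+1) + 1)·p(T). -/
open SimpleGraph

section Helpers

set_option linter.unusedSectionVars false
open SimpleGraph Finset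

variable {V : Type*} [DecidableEq V] {G : SimpleGraph V}

lemma dist_mem_support_le {r w x : V} (p : G.Walk r w) (hx : x ∈ p.support) :
    G.dist r x ≤ p.length :=
  le_trans (SimpleGraph.dist_le (p.takeUntil x hx)) (p.length_takeUntil_le hx)

lemma isPath_concat {r u v : V} {p : G.Walk r u} (hp : p.IsPath) (h : G.Adj u v)
    (hv : v ∉ p.support) : (p.concat h).IsPath := by
  rw [← SimpleGraph.Walk.isPath_reverse_iff, SimpleGraph.Walk.reverse_concat]
  refine SimpleGraph.Walk.IsPath.cons (by rwa [SimpleGraph.Walk.isPath_reverse_iff]) ?_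
  rwa [SimpleGraph.Walk.support_reverse, List.mem_reverse]

/-- T1: along an edge, distance from a root changes by exactly one. -/
lemma tree_adj_dist (hT : G.IsTree) (r : V) {u v : V} (h : G.Adj u v) :
    G.dist r v = G.dist r u + 1 ∨ G.dist r u = G.dist r v + 1 := by
  have hc := hT.isConnected
  -- key: distances along an edge are never equal
  have key : ∀ a b : V, G.Adj a b → G.dist r a ≤ G.dist r b → G.dist r b ≠ G.dist r a := by
    intro a b hab hle heq
    obtain ⟨p, hp, hpl⟩ := (hc.1 r a).exists_path_of_dist
    obtain ⟨q, hq, hql⟩ := (hc.1 r b).exists_path_of_dist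
    have hbs : b ∉ p.support := by
      intro hbs
      have h1 : G.dist r b ≤ (p.takeUntil b hbs).length := SimpleGraph.dist_le _
      have h2 := congr_arg SimpleGraph.Walk.length (p.take_spec hbs)
      rw [SimpleGraph.Walk.length_append] at h2
      have h3 : (p.dropUntil b hbs).length = 0 := by omega
      exact G.ne_of_adj hab (SimpleGraph.Walk.eq_of_length_eq_zero h3).symm
    have hP : (p.concat hab).IsPath := isPath_concat hp hab hbs
    have := (hT.existsUnique_path r b).unique hP hq
    have := congr_arg SimpleGraph.Walk.length this
    rw [SimpleGraph.Walk.length_concat, hpl, hql] at this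
    omega
  have h1 : G.dist r v ≤ G.dist r u + 1 := by
    have := hc.dist_triangle (u := r) (v := u) (w := v)
    rwa [SimpleGraph.dist_eq_one_iff_adj.mpr h] at this
  have h2 : G.dist r u ≤ G.dist r v + 1 := by
    have := hc.dist_triangle (u := r) (v := v) (w := u)
    rwa [SimpleGraph.dist_eq_one_iff_adj.mpr h.symm] at this
  rcases le_or_gt (G.dist r u) (G.dist r v) with hle | hlt
  · exact Or.inl (by have := key u v h hle; omega)
  · exact Or.inr (by have := key v u h.symm hlt.le; omega)

/-- T2: unique parent. -/
lemma tree_unique_parent (hT : G.IsTree) (r : V) {x u₁ u₂ : V}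
    (h1 : G.Adj u₁ x) (h2 : G.Adj u₂ x)
    (hd1 : G.dist r u₁ + 1 = G.dist r x) (hd2 : G.dist r u₂ + 1 = G.dist r x) :
    u₁ = u₂ := by
  have hc := hT.isConnected
  obtain ⟨p₁, hp₁, hl₁⟩ := (hc.1 r u₁).exists_path_of_dist
  obtain ⟨p₂, hp₂, hl₂⟩ := (hc.1 r u₂).exists_path_of_dist
  have hx1 : x ∉ p₁.support := fun hxs => by
    have := dist_mem_support_le p₁ hxs; omega
  have hx2 : x ∉ p₂.support := fun hxs => by
    have := dist_mem_support_le p₂ hxs; omega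
  have hP1 : (p₁.concat h1).IsPath := isPath_concat hp₁ h1 hx1
  have hP2 : (p₂.concat h2).IsPath := isPath_concat hp₂ h2 hx2
  have heq := (hT.existsUnique_path r x).unique hP1 hP2
  obtain ⟨hv, -⟩ := SimpleGraph.Walk.concat_inj heq
  exact hv

/-- T3: every non-root vertex has a parent. -/
lemma tree_exists_parent (hT : G.IsTree) (r : V) {x : V} (hx : x ≠ r) :
    ∃ s, G.Adj x s ∧ G.dist r s + 1 = G.dist r x := by
  have hc := hT.isConnected
  obtain ⟨p, hp, hl⟩ := (hc.1 r x).exists_path_of_dist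
  obtain ⟨s, hadj, q, hq⟩ := SimpleGraph.Walk.exists_eq_cons_of_ne hx p.reverse
  refine ⟨s, hadj, ?_⟩
  have hql : q.length + 1 = G.dist r x := by
    have := congr_arg SimpleGraph.Walk.length hq
    rw [SimpleGraph.Walk.length_reverse, SimpleGraph.Walk.length_cons] at this
    omega
  have h1 : G.dist r s ≤ q.length := by
    have := SimpleGraph.dist_le q.reverse
    rwa [SimpleGraph.Walk.length_reverse] at this
  have h2 : G.dist r x ≤ G.dist r s + 1 := by
    have := hc.dist_triangle (u := r) (v := s) (w := x)
    rwa [SimpleGraph.dist_eq_one_iff_adj.mpr hadj.symm] at this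
  omega




/-- closed neighborhood as a Finset -/
noncomputable def cnbr [Fintype V] (G : SimpleGraph V) (v : V) : Finset V :=
  letI := Classical.decPred (G.Adj v)
  insert v (Finset.univ.filter (G.Adj v))

lemma mem_cnbr [Fintype V] {v u : V} : u ∈ cnbr G v ↔ u = v ∨ G.Adj v u := by
  letI := Classical.decPred (G.Adj v)
  simp [cnbr]

lemma pack_cover [Fintype V] (hT : G.IsTree) (r : V) (A : Finset V) :
    ∃ S P : Finset V, P ⊆ A ∧
      (∀ v ∈ A, ∃ u ∈ S, u = v ∨ G.Adj u v) ∧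
      ((P : Set V).Pairwise fun a b => Disjoint (cnbr G a) (cnbr G b)) ∧
      S.card ≤ P.card := by
  suffices H : ∀ n (A : Finset V), A.card ≤ n → ∃ S P : Finset V, P ⊆ A ∧
      (∀ v ∈ A, ∃ u ∈ S, u = v ∨ G.Adj u v) ∧
      ((P : Set V).Pairwise fun a b => Disjoint (cnbr G a) (cnbr G b)) ∧
      S.card ≤ P.card from H A.card A le_rfl
  intro n
  induction n with
  | zero =>
    intro A hA
    rw [Nat.le_zero, Finset.card_eq_zero] at hA
    subst hA
    exact ⟨∅, ∅, by simp, by simp, by simp, le_rfl⟩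
  | succ n ih =>
    intro A hA
    rcases A.eq_empty_or_nonempty with rfl | hne
    · exact ⟨∅, ∅, by simp, by simp, by simp, le_rfl⟩
    obtain ⟨a, haA, hmax⟩ := A.exists_max_image (fun v => G.dist r v) hne
    -- choose s : either a itself (if a = r) or the parent of a
    obtain ⟨s, hs1, hs2⟩ : ∃ s, (s = a ∨ G.Adj a s) ∧
        (∀ x, G.Adj a x → G.dist r x + 1 = G.dist r a → x = s) := by
      by_cases har : a = r
      · refine ⟨a, Or.inl rfl, ?_⟩
        intro x hx hd
        subst har
        rw [SimpleGraph.dist_self] at hd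
        omega
      · obtain ⟨s, hadj, hds⟩ := tree_exists_parent hT r har
        refine ⟨s, Or.inr hadj, ?_⟩
        intro x hx hd
        exact tree_unique_parent hT r hx.symm hadj.symm hd hds
    have has : a ∈ cnbr G s := by
      rcases hs1 with rfl | hadj
      · exact mem_cnbr.mpr (Or.inl rfl)
      · exact mem_cnbr.mpr (Or.inr hadj.symm)
    set A' := A \ cnbr G s with hA'def
    have hA'ss : A' ⊆ A := Finset.sdiff_subset
    have hA'card : A'.card ≤ n := by
      have : A' ⊂ A := Finset.ssubset_iff_of_subset hA'ss |>.mpr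
        ⟨a, haA, by simp [hA'def, has]⟩
      have := Finset.card_lt_card this
      omega
    obtain ⟨S', P', hP'A, hcov', hpair', hcard'⟩ := ih A' hA'card
    have hP'nbr : ∀ b ∈ P', b ∉ cnbr G s := by
      intro b hb
      have := hP'A hb
      rw [hA'def, Finset.mem_sdiff] at this
      exact this.2
    have hP'A2 : ∀ b ∈ P', b ∈ A := fun b hb => hA'ss (hP'A hb)
    -- key disjointness
    have hkey : ∀ b ∈ P', Disjoint (cnbr G a) (cnbr G b) := by
      intro b hbP
      have hbs := hP'nbr b hbP
      have hbA := hP'A2 b hbP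
      have hble : G.dist r b ≤ G.dist r a := hmax b hbA
      have hba : b ≠ a := fun h => hbs (h ▸ has)
      rw [Finset.disjoint_left]
      intro x hxa hxb
      rw [mem_cnbr] at hxa hxb
      -- helper: adjacency between a and b is impossible
      have hadj_ab : ¬ G.Adj a b := by
        intro hab
        rcases tree_adj_dist hT r hab with h' | h'
        · omega
        · exact hbs ((hs2 b hab (by omega)) ▸ mem_cnbr.mpr (Or.inl rfl))
      rcases hxa with rfl | hax
      · rcases hxb with rfl | hbx
        · exact hba rfl
        · exact hadj_ab hbx.symm
      · rcases hxb with rfl | hbx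
        · exact hadj_ab hax
        · -- common neighbor x
          rcases tree_adj_dist hT r hax with h1 | h1
          · rcases tree_adj_dist hT r hbx with h2 | h2
            · -- both a, b parents of x
              have : a = b := tree_unique_parent hT r hax hbx (by omega) (by omega)
              exact hba this.symm
            · omega
          · -- x is the parent of a, so x = s
            have hxs : x = s := hs2 x hax (by omega)
            subst hxs
            exact hbs (mem_cnbr.mpr (Or.inr hbx.symm))
    have haP' : a ∉ P' := fun h => hP'nbr a h has
    refine ⟨insert s S', insert a P', ?_, ?_, ?_, ?_⟩
    · intro x hx
      rcases Finset.mem_insert.mp hx with rfl | hx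
      · exact haA
      · exact hP'A2 x hx
    · intro v hv
      by_cases hvs : v ∈ cnbr G s
      · refine ⟨s, Finset.mem_insert_self _ _, ?_⟩
        rcases mem_cnbr.mp hvs with rfl | h
        · exact Or.inl rfl
        · exact Or.inr h
      · obtain ⟨u, huS, hu⟩ := hcov' v (by rw [hA'def, Finset.mem_sdiff]; exact ⟨hv, hvs⟩)
        exact ⟨u, Finset.mem_insert_of_mem huS, hu⟩
    · rw [Finset.coe_insert]
      haveI : Std.Symm (fun a b => Disjoint (cnbr G a) (cnbr G b)) := ⟨by
        intro x y h
        exact h.symm⟩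
      refine Set.pairwise_insert_of_symm |>.mpr ⟨hpair', fun b hb _ => hkey b hb⟩
    · calc (insert s S').card ≤ S'.card + 1 := Finset.card_insert_le _ _
        _ ≤ P'.card + 1 := by omega
        _ = (insert a P').card := (Finset.card_insert_of_notMem haP').symm

section Counting

open SimpleGraph Finset
open scoped Classical

variable {V : Type*} [DecidableEq V] [Fintype V] (G : SimpleGraph V)

noncomputable def nbrF (v : V) : Finset V := Finset.univ.filter (G.Adj v)
noncomputable def leafS : Finset V := Finset.univ.filter (fun v => IsLeaf G v)
noncomputable def penS : Finset V := Finset.univ.filter (fun v => IsPenultimate G v)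
noncomputable def deepS : Finset V := Finset.univ.filter (fun v => IsDeep G v)

variable {G}

lemma mem_nbrF {v u : V} : u ∈ nbrF G v ↔ G.Adj v u := by simp [nbrF]
lemma mem_leafS {v : V} : v ∈ leafS G ↔ IsLeaf G v := by simp [leafS]
lemma mem_penS {v : V} : v ∈ penS G ↔ IsPenultimate G v := by simp [penS]
lemma mem_deepS {v : V} : v ∈ deepS G ↔ IsDeep G v := by simp [deepS]

lemma degNat_eq (v : V) : degNat G v = (nbrF G v).card := by
  rw [degNat, Nat.card_eq_fintype_card, Fintype.card_subtype]
  congr 1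

lemma pNum_eq : pNum G = (penS G).card := by
  rw [pNum, Nat.card_eq_fintype_card, Fintype.card_subtype]
  congr 1

lemma cnbr_eq (v : V) : cnbr G v = insert v (nbrF G v) := by
  ext u; simp [mem_cnbr, mem_nbrF, Finset.mem_insert]

lemma card_cnbr (v : V) : (cnbr G v).card = degNat G v + 1 := by
  rw [cnbr_eq, Finset.card_insert_of_notMem (by simp [mem_nbrF]), degNat_eq]

lemma sum_partition (f : V → ℕ) :
    ∑ v, f v = ∑ v ∈ leafS G, f v + ∑ v ∈ penS G, f v + ∑ v ∈ deepS G, f v := by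
  have h1 := Finset.sum_filter_add_sum_filter_not Finset.univ (fun v => IsLeaf G v) f
  have h2 := Finset.sum_filter_add_sum_filter_not
    (Finset.univ.filter (fun v => ¬ IsLeaf G v)) (fun v => IsPenultimate G v) f
  rw [Finset.filter_filter, Finset.filter_filter] at h2
  have e1 : (Finset.univ.filter fun v => ¬ IsLeaf G v ∧ IsPenultimate G v) = penS G := by
    ext v
    simp only [Finset.mem_filter, Finset.mem_univ, true_and, mem_penS]
    exact ⟨fun h => h.2, fun h => ⟨h.1, h⟩⟩
  have e2 : (Finset.univ.filter fun v => ¬ IsLeaf G v ∧ ¬ IsPenultimate G v) = deepS G := by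
    ext v
    simp [mem_deepS, IsDeep]
  rw [e1, e2] at h2
  have e3 : (Finset.univ.filter fun v => IsLeaf G v) = leafS G := rfl
  rw [e3] at h1
  omega

/-- Every leaf has a unique neighbor, which is penultimate. -/
lemma leaf_nbr (hT : G.IsTree) (hcard : 3 ≤ Fintype.card V) {u : V} (hu : IsLeaf G u) :
    ∃ w, nbrF G u = {w} ∧ IsPenultimate G w := by
  have hcard1 : (nbrF G u).card = 1 := by rw [← degNat_eq]; exact hu
  obtain ⟨w, hw⟩ := Finset.card_eq_one.mp hcard1
  have hadj : G.Adj u w := by rw [← mem_nbrF (v := u), hw]; exact Finset.mem_singleton_self w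
  refine ⟨w, hw, ?_, u, hadj.symm, hu⟩
  -- w is not a leaf
  intro hwleaf
  have hcard1' : (nbrF G w).card = 1 := by rw [← degNat_eq]; exact hwleaf
  have hwn : nbrF G w = {u} := by
    obtain ⟨z, hz⟩ := Finset.card_eq_one.mp hcard1'
    have : u ∈ nbrF G w := mem_nbrF.mpr hadj.symm
    rw [hz] at this ⊢
    rw [Finset.mem_singleton.mp this]
  -- third vertex
  obtain ⟨z, hzu, hzw⟩ : ∃ z, z ≠ u ∧ z ≠ w := by
    by_contra hcon
    push_neg at hcon
    have : (Finset.univ : Finset V) ⊆ {u, w} := by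
      intro z _
      rcases em (z = u) with rfl | h
      · exact Finset.mem_insert_self _ _
      · simp [hcon z h]
    have := Finset.card_le_card this
    have h2 : ({u, w} : Finset V).card ≤ 2 := Finset.card_insert_le _ _ |>.trans (by simp)
    simp only [Finset.card_univ] at this
    omega
  obtain ⟨p, hp, -⟩ := (hT.isConnected.preconnected u z).exists_path_of_dist
  obtain ⟨x, hux, q, rfl⟩ := SimpleGraph.Walk.exists_eq_cons_of_ne (Ne.symm hzu) p
  have hxw : x = w := by
    have : x ∈ nbrF G u := mem_nbrF.mpr hux
    rw [hw] at this; exact Finset.mem_singleton.mp this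
  subst hxw
  obtain ⟨y, hwy, q', rfl⟩ := SimpleGraph.Walk.exists_eq_cons_of_ne (Ne.symm hzw) q
  have hyu : y = u := by
    have hmem : y ∈ nbrF G x := mem_nbrF.mpr hwy
    rw [hwn] at hmem; exact Finset.mem_singleton.mp hmem
  subst hyu
  have := hp.support_nodup
  simp [SimpleGraph.Walk.support_cons] at this

/-- deep vertices have no leaf neighbors -/
lemma deep_no_leaf_nbr {v u : V} (hv : IsDeep G v) (hadj : G.Adj v u) : ¬ IsLeaf G u :=
  fun hu => hv.2 ⟨hv.1, u, hadj, hu⟩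

noncomputable def eCnt (G : SimpleGraph V) (B C : Finset V) : ℕ :=
  ∑ v ∈ B, ∑ u ∈ C, if G.Adj v u then 1 else 0

lemma eCnt_symm (B C : Finset V) : eCnt G B C = eCnt G C B := by
  unfold eCnt
  rw [Finset.sum_comm]
  refine Finset.sum_congr rfl fun u _ => Finset.sum_congr rfl fun v _ => ?_
  simp_rw [SimpleGraph.adj_comm]

/-- The key counting inequality: `(k-2)·#deep + 1 ≤ #penultimate`. -/
lemma count_key (hT : G.IsTree) (hcard : 3 ≤ Fintype.card V) (k : ℕ) (hk : 3 ≤ k)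
    (hdeep : ∀ v : V, IsDeep G v → k ≤ degNat G v) :
    (k - 2) * (deepS G).card + 1 ≤ (penS G).card := by
  have hne : Nonempty V := Fintype.card_pos_iff.mp (by omega)
  obtain ⟨r⟩ := hne
  set n := Fintype.card V with hn
  set L := (leafS G).card with hL
  set p := (penS G).card with hp
  set d := (deepS G).card with hd
  -- partition of vertices
  have hpart : n = L + p + d := by
    have := sum_partition (G := G) (fun _ => 1)
    simpa [Finset.card_univ] using this
  -- handshake
  have hshake : ∑ v, (nbrF G v).card + 2 = 2 * n := by
    have h1 : ∀ v, nbrF G v = G.neighborFinset v := by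
      intro v; ext u; simp [mem_nbrF]
    have h2 : ∑ v, G.degree v = 2 * G.edgeFinset.card :=
      SimpleGraph.sum_degrees_eq_twice_card_edges G
    have h3 : G.edgeFinset.card + 1 = n := hT.card_edgeFinset
    calc ∑ v, (nbrF G v).card + 2 = ∑ v, G.degree v + 2 := by
          simp_rw [h1]; rfl
      _ = 2 * G.edgeFinset.card + 2 := by rw [h2]
      _ = 2 * n := by omega
  -- degree decomposition
  have hdeg_split : ∀ v, (nbrF G v).card
      = ∑ u ∈ leafS G, (if G.Adj v u then 1 else 0)
      + ∑ u ∈ penS G, (if G.Adj v u then 1 else 0)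
      + ∑ u ∈ deepS G, (if G.Adj v u then 1 else 0) := by
    intro v
    rw [nbrF, Finset.card_filter]
    exact sum_partition _
  -- leaves have degree 1
  have hleafdeg : ∑ v ∈ leafS G, (nbrF G v).card = L := by
    rw [hL]
    rw [Finset.card_eq_sum_ones (leafS G)]
    refine Finset.sum_congr rfl fun v hv => ?_
    rw [← degNat_eq]
    exact mem_leafS.mp hv
  -- e (penS) (leafS) = L
  have hpl : eCnt G (penS G) (leafS G) = L := by
    rw [eCnt_symm]
    unfold eCnt
    rw [hL, Finset.card_eq_sum_ones (leafS G)]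
    refine Finset.sum_congr rfl fun u hu => ?_
    obtain ⟨w, hw, hwpen⟩ := leaf_nbr hT hcard (mem_leafS.mp hu)
    have : ∀ v, G.Adj u v ↔ v = w := by
      intro v
      rw [← mem_nbrF (v := u), hw, Finset.mem_singleton]
    calc ∑ v ∈ penS G, (if G.Adj u v then 1 else 0)
        = ∑ v ∈ penS G, (if v = w then 1 else 0) := by
          exact Finset.sum_congr rfl fun v _ => if_congr (this v) rfl rfl
      _ = 1 := by
          rw [Finset.sum_ite_eq' (penS G) w (fun _ => 1)]
          simp [mem_penS.mpr hwpen]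
  -- pen degree sum lower bound
  have hpensum : L + eCnt G (penS G) (deepS G) ≤ ∑ v ∈ penS G, (nbrF G v).card := by
    calc L + eCnt G (penS G) (deepS G)
        = eCnt G (penS G) (leafS G) + eCnt G (penS G) (deepS G) := by rw [hpl]
      _ ≤ eCnt G (penS G) (leafS G) + eCnt G (penS G) (penS G) + eCnt G (penS G) (deepS G) := by omega
      _ = ∑ v ∈ penS G, (nbrF G v).card := by
          unfold eCnt
          simp only [← Finset.sum_add_distrib]
          exact (Finset.sum_congr rfl fun v _ => (hdeg_split v).symm)
  -- deep degree sum
  have hdeepsum : ∑ v ∈ deepS G, (nbrF G v).card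
      = eCnt G (deepS G) (penS G) + eCnt G (deepS G) (deepS G) := by
    unfold eCnt
    simp only [← Finset.sum_add_distrib]
    refine Finset.sum_congr rfl fun v hv => ?_
    rw [hdeg_split v]
    have : ∑ u ∈ leafS G, (if G.Adj v u then 1 else 0) = 0 := by
      refine Finset.sum_eq_zero fun u hu => ?_
      simp only [ite_eq_right_iff]
      intro hadj
      exact absurd (mem_leafS.mp hu) (deep_no_leaf_nbr (mem_deepS.mp hv) hadj)
    omega
  -- deep degrees at least k
  have hdeepk : k * d ≤ ∑ v ∈ deepS G, (nbrF G v).card := by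
    rw [hd, Finset.card_eq_sum_ones (deepS G), Finset.mul_sum]
    refine Finset.sum_le_sum fun v hv => ?_
    rw [mul_one, ← degNat_eq]
    exact hdeep v (mem_deepS.mp hv)
  -- Y ≤ 2d via parent counting
  have hY : eCnt G (deepS G) (deepS G) ≤ 2 * d := by
    set Ydown := ∑ v ∈ deepS G, ∑ u ∈ deepS G,
      (if G.Adj v u ∧ G.dist r u = G.dist r v + 1 then 1 else 0) with hYd
    set Yup := ∑ v ∈ deepS G, ∑ u ∈ deepS G,
      (if G.Adj v u ∧ G.dist r v = G.dist r u + 1 then 1 else 0) with hYu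
    have hsplit : eCnt G (deepS G) (deepS G) = Ydown + Yup := by
      unfold eCnt
      rw [hYd, hYu]
      simp only [← Finset.sum_add_distrib]
      refine Finset.sum_congr rfl fun v _ => Finset.sum_congr rfl fun u _ => ?_
      by_cases hadj : G.Adj v u
      · rcases tree_adj_dist hT r hadj with h1 | h1
        · rw [if_pos hadj, if_pos ⟨hadj, h1⟩, if_neg (fun hc => by omega)]
        · rw [if_pos hadj, if_neg (fun hc => by omega), if_pos ⟨hadj, h1⟩]
      · rw [if_neg hadj, if_neg (fun hc => hadj hc.1), if_neg (fun hc => hadj hc.1)]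
    have hupdown : Yup = Ydown := by
      rw [hYu, hYd, Finset.sum_comm]
      refine Finset.sum_congr rfl fun v _ => Finset.sum_congr rfl fun u _ => ?_
      rw [SimpleGraph.adj_comm]
    have hdown : Ydown ≤ d := by
      rw [hYd, Finset.sum_comm, hd, Finset.card_eq_sum_ones (deepS G)]
      refine Finset.sum_le_sum fun u _ => ?_
      rw [← Finset.card_filter]
      refine Finset.card_le_one.mpr (fun a ha b hb => ?_) |>.trans le_rfl
      simp only [Finset.mem_filter] at ha hb
      exact tree_unique_parent hT r ha.2.1 hb.2.1 (by omega) (by omega)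
    omega
  -- final arithmetic
  have hXY : k * d ≤ eCnt G (deepS G) (penS G) + eCnt G (deepS G) (deepS G) := by
    rw [← hdeepsum]; exact hdeepk
  have hbig : L + (L + eCnt G (penS G) (deepS G))
      + (eCnt G (deepS G) (penS G) + eCnt G (deepS G) (deepS G)) + 2 ≤ 2 * n := by
    rw [← hshake, sum_partition (fun v => (nbrF G v).card), hleafdeg, ← hdeepsum]
    have := hpensum
    omega
  have hsym2 : eCnt G (penS G) (deepS G) = eCnt G (deepS G) (penS G) := eCnt_symm _ _
  have hmul : (k - 2) * d + 2 * d = k * d := by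
    have hk2 : k - 2 + 2 = k := by omega
    calc (k - 2) * d + 2 * d = (k - 2 + 2) * d := by ring
      _ = k * d := by rw [hk2]
  set X := eCnt G (deepS G) (penS G)
  set Y := eCnt G (deepS G) (deepS G)
  rw [hsym2] at hbig
  -- hbig : 2L + 2X + Y + 2 ≤ 2n = 2(L+p+d)
  have h2n : 2 * n = 2 * L + 2 * p + 2 * d := by omega
  linarith [hXY, hY, hbig, hmul]

end Counting

end Helpers


/-- Let `k ≥ 3` and let `T` be a finite tree on at least `3` vertices
in which every deep vertex has degree at least `k`. Then
`(k−2)(k+1)·γ(T) < ((k−2)(k+1) + 1)·p(T)`, i.e. `γ(T) < (1 + 1/((k−2)(k+1)))·p(T)`. -/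
theorem domNum_lt_of_deep_degree_ge {V : Type*} [Fintype V] [DecidableEq V]
    (k : ℕ) (hk : 3 ≤ k) (G : SimpleGraph V) (hT : G.IsTree)
    (hcard : 3 ≤ Fintype.card V)
    (hdeep : ∀ v : V, IsDeep G v → k ≤ degNat G v) :
    (k - 2) * (k + 1) * domNum G < ((k - 2) * (k + 1) + 1) * pNum G := by
  classical
  have hne : Nonempty V := Fintype.card_pos_iff.mp (by omega)
  obtain ⟨r⟩ := hne
  set A := (deepS G).filter (fun v => ∀ u, G.Adj v u → ¬ IsPenultimate G u) with hA
  obtain ⟨S, P, hPA, hcov, hpair, hSP⟩ := pack_cover hT r A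
  -- the penultimate vertices together with S form a dominating set
  have hdom : IsDomSet G (penS G ∪ S) := by
    intro v
    by_cases hvleaf : IsLeaf G v
    · obtain ⟨w, hw, hwpen⟩ := leaf_nbr hT hcard hvleaf
      have hadj : G.Adj v w := by
        have : w ∈ nbrF G v := by rw [hw]; exact Finset.mem_singleton_self w
        exact mem_nbrF.mp this
      exact Or.inr ⟨w, Finset.mem_union_left _ (mem_penS.mpr hwpen), hadj.symm⟩
    · by_cases hvpen : IsPenultimate G v
      · exact Or.inl (Finset.mem_union_left _ (mem_penS.mpr hvpen))
      · have hvdeep : IsDeep G v := ⟨hvleaf, hvpen⟩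
        by_cases hpn : ∃ u, G.Adj v u ∧ IsPenultimate G u
        · obtain ⟨u, hadj, hupen⟩ := hpn
          exact Or.inr ⟨u, Finset.mem_union_left _ (mem_penS.mpr hupen), hadj.symm⟩
        · push_neg at hpn
          have hvA : v ∈ A := by
            rw [hA, Finset.mem_filter]
            exact ⟨mem_deepS.mpr hvdeep, fun u h => hpn u h⟩
          obtain ⟨u, huS, hu⟩ := hcov v hvA
          rcases hu with rfl | hadj
          · exact Or.inl (Finset.mem_union_right _ huS)
          · exact Or.inr ⟨u, Finset.mem_union_right _ huS, hadj⟩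
  have hγ : domNum G ≤ (penS G).card + P.card := by
    have h1 : domNum G ≤ (penS G ∪ S).card := Nat.sInf_le ⟨_, hdom, rfl⟩
    have h2 := Finset.card_union_le (penS G) S
    omega
  -- the packing bound: (k+1)·|P| ≤ #deep
  have hpackbound : (k + 1) * P.card ≤ (deepS G).card := by
    have hsub : ∀ a ∈ P, cnbr G a ⊆ deepS G := by
      intro a haP x hx
      have haA := hPA haP
      rw [hA, Finset.mem_filter] at haA
      obtain ⟨hadeep', hnopen⟩ := haA
      have hadeep := mem_deepS.mp hadeep'
      rcases mem_cnbr.mp hx with rfl | hadj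
      · exact hadeep'
      · refine mem_deepS.mpr ⟨?_, hnopen x hadj⟩
        exact fun hleaf => hadeep.2 ⟨hadeep.1, x, hadj, hleaf⟩
    have hdisj : ∀ a ∈ P, ∀ b ∈ P, a ≠ b → Disjoint (cnbr G a) (cnbr G b) := by
      intro a ha b hb hab
      exact hpair (Finset.mem_coe.mpr ha) (Finset.mem_coe.mpr hb) hab
    calc (k + 1) * P.card = ∑ _a ∈ P, (k + 1) := by
          rw [Finset.sum_const, smul_eq_mul, mul_comm]
      _ ≤ ∑ a ∈ P, (cnbr G a).card := by
          refine Finset.sum_le_sum fun a ha => ?_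
          rw [card_cnbr]
          have haA := hPA ha
          rw [hA, Finset.mem_filter] at haA
          have := hdeep a (mem_deepS.mp haA.1)
          omega
      _ = (P.biUnion (cnbr G)).card := (Finset.card_biUnion hdisj).symm
      _ ≤ (deepS G).card := by
          refine Finset.card_le_card ?_
          intro x hx
          obtain ⟨a, ha, hxa⟩ := Finset.mem_biUnion.mp hx
          exact hsub a ha hxa
  have hcount := count_key hT hcard k hk hdeep
  rw [pNum_eq]
  have hmain : (k - 2) * (k + 1) * P.card ≤ (k - 2) * (deepS G).card := by
    calc (k - 2) * (k + 1) * P.card = (k - 2) * ((k + 1) * P.card) := by ring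
      _ ≤ (k - 2) * (deepS G).card := Nat.mul_le_mul_left _ hpackbound
  have hP_lt : (k - 2) * (k + 1) * P.card < (penS G).card :=
    lt_of_le_of_lt hmain (by omega)
  calc (k - 2) * (k + 1) * domNum G
      ≤ (k - 2) * (k + 1) * ((penS G).card + P.card) := Nat.mul_le_mul_left _ hγ
    _ = (k - 2) * (k + 1) * (penS G).card + (k - 2) * (k + 1) * P.card := by ring
    _ < (k - 2) * (k + 1) * (penS G).card + (penS G).card := Nat.add_lt_add_left hP_lt _
    _ = ((k - 2) * (k + 1) + 1) * (penS G).card := by ring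
end

section
/- For every integer n ≥ 2, there exists a finite tree T with γ(T) = n and ν(T) = 2n − 1, where ν(T) is the number of Laplacian eigenvalues of T, counted with multiplicity, that are at least 2. -/
open SimpleGraph

section SpectralTheory
open Matrix
variable {N m : ℕ} {A : Matrix (Fin N) (Fin N) ℝ} (hA : A.IsHermitian)


/-- The coordinates of `x` in the eigenvector basis, as `x ᵥ* U`. -/
noncomputable def eigCoords (hA : A.IsHermitian) (x : Fin N → ℝ) : Fin N → ℝ :=
  x ᵥ* (hA.eigenvectorUnitary : Matrix (Fin N) (Fin N) ℝ)

lemma star_unitary_mulVec (x : Fin N → ℝ) :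
    (star (hA.eigenvectorUnitary : Matrix (Fin N) (Fin N) ℝ)) *ᵥ x = eigCoords hA x := by
  rw [eigCoords, ← mulVec_transpose]
  congr 1

lemma mulVec_eigCoords (x : Fin N → ℝ) :
    (hA.eigenvectorUnitary : Matrix (Fin N) (Fin N) ℝ) *ᵥ (eigCoords hA x) = x := by
  rw [← star_unitary_mulVec hA x, mulVec_mulVec]
  rw [(Matrix.mem_unitaryGroup_iff).mp (hA.eigenvectorUnitary).2, one_mulVec]

lemma eigCoords_eq_zero_iff (x : Fin N → ℝ) : eigCoords hA x = 0 ↔ x = 0 := by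
  constructor
  · intro h
    rw [← mulVec_eigCoords hA x, h, mulVec_zero]
  · intro h; rw [h, eigCoords, zero_vecMul]

lemma dot_self_eq_sum_eigCoords (x : Fin N → ℝ) :
    x ⬝ᵥ x = ∑ i, (eigCoords hA x i)^2 := by
  have : (eigCoords hA x) ⬝ᵥ (eigCoords hA x) = x ⬝ᵥ x := by
    conv_lhs => rw [eigCoords, ← dotProduct_mulVec]
    exact congrArg (fun y => x ⬝ᵥ y) (mulVec_eigCoords hA x)
  rw [← this]
  simp [dotProduct, sq]

lemma dot_mulVec_eq_sum_eigCoords (x : Fin N → ℝ) :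
    x ⬝ᵥ A *ᵥ x = ∑ i, hA.eigenvalues i * (eigCoords hA x i)^2 := by
  conv_lhs => rw [hA.spectral_theorem]
  rw [Unitary.conjStarAlgAut_apply, ← mulVec_mulVec, ← mulVec_mulVec, star_unitary_mulVec hA x, dotProduct_mulVec, ← eigCoords]
  have hd : (diagonal (RCLike.ofReal ∘ hA.eigenvalues)) *ᵥ (eigCoords hA x)
      = fun i => hA.eigenvalues i * eigCoords hA x i := by
    ext i; simp [mulVec_diagonal]
  rw [hd, dotProduct]
  congr 1; ext i; ring

open Classical in
/-- If the number of "big" coordinates is < m, an injective m-dim family has a nonzero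
element whose eigen-coordinates vanish on K. -/
lemma exists_perp (K : Finset (Fin N)) (hK : K.card < m)
    (Φ : (Fin m → ℝ) →ₗ[ℝ] (Fin N → ℝ)) (hΦ : Function.Injective Φ) :
    ∃ x : Fin N → ℝ, x ≠ 0 ∧ (∃ c, x = Φ c) ∧ ∀ i ∈ K, eigCoords hA x i = 0 := by
  classical
  set U : Matrix (Fin N) (Fin N) ℝ := (hA.eigenvectorUnitary : Matrix (Fin N) (Fin N) ℝ)
  let ψ : (Fin m → ℝ) →ₗ[ℝ] ({i // i ∈ K} → ℝ) :=
    (LinearMap.funLeft ℝ ℝ (Subtype.val)).comp (U.vecMulLinear.comp Φ)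
  have hninj : ¬ Function.Injective ψ := by
    intro hinj
    have h1 := LinearMap.finrank_le_finrank_of_injective hinj
    rw [Module.finrank_fintype_fun_eq_card, Module.finrank_fintype_fun_eq_card,
      Fintype.card_fin, Fintype.card_coe] at h1
    omega
  have hker : LinearMap.ker ψ ≠ ⊥ := fun h => hninj (LinearMap.ker_eq_bot.mp h)
  obtain ⟨c, hcker, hcne⟩ := (Submodule.ne_bot_iff _).mp hker
  have hc0 : ψ c = 0 := hcker
  refine ⟨Φ c, ?_, ⟨c, rfl⟩, ?_⟩
  · intro h
    exact hcne (hΦ (by rw [h, map_zero]))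
  · intro i hi
    have := congrFun hc0 ⟨i, hi⟩
    simpa [ψ, eigCoords, U, LinearMap.funLeft_apply, Matrix.vecMulLinear_apply] using this
lemma count_ge (t : ℝ) (Φ : (Fin m → ℝ) →ₗ[ℝ] (Fin N → ℝ)) (hΦ : Function.Injective Φ)
    (h : ∀ c, t * (Φ c ⬝ᵥ Φ c) ≤ Φ c ⬝ᵥ A *ᵥ Φ c) :
    m ≤ Nat.card {i : Fin N // t ≤ hA.eigenvalues i} := by
  classical
  rw [Nat.card_eq_fintype_card, Fintype.card_subtype]
  by_contra hlt
  push_neg at hlt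
  obtain ⟨x, hx0, ⟨c, hxc⟩, hperp⟩ := exists_perp hA
    (Finset.univ.filter (fun i => t ≤ hA.eigenvalues i)) hlt Φ hΦ
  set z := eigCoords hA x with hz
  have hz0 : z ≠ 0 := fun hzz => hx0 ((eigCoords_eq_zero_iff hA x).mp hzz)
  obtain ⟨i0, hi0'⟩ := Function.ne_iff.mp hz0
  have hi0 : z i0 ≠ 0 := by simpa using hi0'
  have hi0K : ¬ t ≤ hA.eigenvalues i0 := by
    intro hti
    exact hi0 (hperp i0 (Finset.mem_filter.mpr ⟨Finset.mem_univ _, hti⟩))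
  have hstrict : ∑ i, hA.eigenvalues i * (z i)^2 < ∑ i, t * (z i)^2 := by
    apply Finset.sum_lt_sum
    · intro i _
      by_cases hiK : t ≤ hA.eigenvalues i
      · have : z i = 0 := hperp i (Finset.mem_filter.mpr ⟨Finset.mem_univ _, hiK⟩)
        simp [this]
      · exact mul_le_mul_of_nonneg_right (le_of_lt (not_le.mp hiK)) (sq_nonneg _)
    · refine ⟨i0, Finset.mem_univ _, ?_⟩
      have : (0:ℝ) < (z i0)^2 := lt_of_le_of_ne (sq_nonneg _) (Ne.symm (pow_ne_zero 2 hi0))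
      exact mul_lt_mul_of_pos_right (not_le.mp hi0K) this
  have h1 := h c
  rw [← hxc] at h1
  rw [dot_mulVec_eq_sum_eigCoords hA, dot_self_eq_sum_eigCoords hA, ← hz] at h1
  rw [← Finset.mul_sum] at hstrict
  linarith

lemma count_le (t : ℝ) (Φ : (Fin m → ℝ) →ₗ[ℝ] (Fin N → ℝ)) (hΦ : Function.Injective Φ)
    (h : ∀ c, c ≠ 0 → Φ c ⬝ᵥ A *ᵥ Φ c < t * (Φ c ⬝ᵥ Φ c)) :
    Nat.card {i : Fin N // t ≤ hA.eigenvalues i} + m ≤ N := by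
  classical
  rw [Nat.card_eq_fintype_card, Fintype.card_subtype]
  by_contra hlt
  push_neg at hlt
  have hcards := Finset.card_filter_add_card_filter_not
    (s := (Finset.univ : Finset (Fin N))) (p := fun i => t ≤ hA.eigenvalues i)
  rw [Finset.card_univ, Fintype.card_fin] at hcards
  have hK : (Finset.univ.filter (fun i => ¬ t ≤ hA.eigenvalues i)).card < m := by omega
  obtain ⟨x, hx0, ⟨c, hxc⟩, hperp⟩ := exists_perp hA _ hK Φ hΦ
  set z := eigCoords hA x with hz
  have hge : ∑ i, t * (z i)^2 ≤ ∑ i, hA.eigenvalues i * (z i)^2 := by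
    apply Finset.sum_le_sum
    intro i _
    by_cases hiK : t ≤ hA.eigenvalues i
    · exact mul_le_mul_of_nonneg_right hiK (sq_nonneg _)
    · have : z i = 0 := hperp i (Finset.mem_filter.mpr ⟨Finset.mem_univ _, hiK⟩)
      simp [this]
  have hc0 : c ≠ 0 := by rintro rfl; rw [map_zero] at hxc; exact hx0 hxc
  have h1 := h c hc0
  rw [← hxc] at h1
  rw [dot_mulVec_eq_sum_eigCoords hA, dot_self_eq_sum_eigCoords hA, ← hz] at h1
  rw [← Finset.mul_sum] at hge
  linarith

end SpectralTheory

section SpiderDef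
open Matrix

/-- parent function -/
def pnat (k : ℕ) : ℕ := if k % 4 = 2 then 0 else k - 1

lemma pnat_le (k : ℕ) : pnat k ≤ k := by unfold pnat; split <;> omega

lemma pnat_lt {k : ℕ} (h : k ≠ 0) : pnat k < k := by unfold pnat; split <;> omega

/-- the spider tree graph -/
def spider (N : ℕ) : SimpleGraph (Fin N) where
  Adj u v := u ≠ v ∧ (pnat u.val = v.val ∨ pnat v.val = u.val)
  symm := by
    constructor
    intro u v ⟨h1, h2⟩
    exact ⟨h1.symm, h2.symm⟩
  loopless := ⟨fun u h => h.1 rfl⟩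

/-- parent as a Fin map -/
def pF {N : ℕ} (k : Fin N) : Fin N := ⟨pnat k.val, lt_of_le_of_lt (pnat_le _) k.isLt⟩

lemma spider_adj_iff {N : ℕ} (u v : Fin N) :
    (spider N).Adj u v ↔ (u.val ≠ 0 ∧ pF u = v) ∨ (v.val ≠ 0 ∧ pF v = u) := by
  constructor
  · rintro ⟨hne, h | h⟩
    · left
      have hu0 : u.val ≠ 0 := by
        intro h0
        apply hne
        have : pnat u.val = u.val := by rw [h0]; rfl
        exact Fin.ext (by omega)
      exact ⟨hu0, Fin.ext h⟩
    · right
      have hv0 : v.val ≠ 0 := by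
        intro h0
        apply hne
        have : pnat v.val = v.val := by rw [h0]; rfl
        exact Fin.ext (by omega)
      exact ⟨hv0, Fin.ext h⟩
  · rintro (⟨h0, hp⟩ | ⟨h0, hp⟩)
    · have hlt : pnat u.val < u.val := pnat_lt h0
      refine ⟨?_, Or.inl (congrArg Fin.val hp)⟩
      intro he; rw [← he] at hp
      have := congrArg Fin.val hp
      simp only [pF] at this
      omega
    · have hlt : pnat v.val < v.val := pnat_lt h0
      refine ⟨?_, Or.inr (congrArg Fin.val hp)⟩
      intro he; rw [he] at hp
      have := congrArg Fin.val hp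
      simp only [pF] at this
      omega

lemma spider_not_both {N : ℕ} (u v : Fin N) :
    ¬((u.val ≠ 0 ∧ pF u = v) ∧ (v.val ≠ 0 ∧ pF v = u)) := by
  rintro ⟨⟨hu, hpu⟩, ⟨hv, hpv⟩⟩
  have h1 : pnat u.val = v.val := congrArg Fin.val hpu
  have h2 : pnat v.val = u.val := congrArg Fin.val hpv
  have := pnat_lt hu
  have := pnat_lt hv
  omega

lemma spider_quad {N : ℕ} [inst : DecidableRel (spider N).Adj] (x : Fin N → ℝ) :
    x ⬝ᵥ (spider N).lapMatrix ℝ *ᵥ x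
      = ∑ k : Fin N, (if k.val ≠ 0 then (x k - x (pF k))^2 else 0) := by
  rw [← Matrix.toLinearMap₂'_apply', SimpleGraph.lapMatrix_toLinearMap₂']
  have hsplit : ∀ i j : Fin N, (if (spider N).Adj i j then (x i - x j)^2 else 0)
      = (if i.val ≠ 0 ∧ pF i = j then (x i - x j)^2 else 0)
        + (if j.val ≠ 0 ∧ pF j = i then (x i - x j)^2 else 0) := by
    intro i j
    by_cases h : (spider N).Adj i j
    · rcases (spider_adj_iff i j).mp h with h1 | h1
      · rw [if_pos h, if_pos h1, if_neg, add_zero]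
        intro h2; exact spider_not_both i j ⟨h1, h2⟩
      · rw [if_pos h, if_pos h1, if_neg, zero_add]
        intro h2; exact spider_not_both i j ⟨h2, h1⟩
    · rw [if_neg h, if_neg, if_neg, add_zero]
      · intro h1; exact h ((spider_adj_iff i j).mpr (Or.inr h1))
      · intro h1; exact h ((spider_adj_iff i j).mpr (Or.inl h1))
  calc (∑ i : Fin N, ∑ j : Fin N, if (spider N).Adj i j then (x i - x j)^2 else 0)/2
      = (∑ i : Fin N, ∑ j : Fin N, ((if i.val ≠ 0 ∧ pF i = j then (x i - x j)^2 else 0)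
        + (if j.val ≠ 0 ∧ pF j = i then (x i - x j)^2 else 0)))/2 := by
        congr 1
        exact Finset.sum_congr rfl fun i _ => Finset.sum_congr rfl fun j _ => hsplit i j
    _ = ((∑ i : Fin N, ∑ j : Fin N, (if i.val ≠ 0 ∧ pF i = j then (x i - x j)^2 else 0))
        + ∑ i : Fin N, ∑ j : Fin N, (if j.val ≠ 0 ∧ pF j = i then (x i - x j)^2 else 0))/2 := by
        simp only [Finset.sum_add_distrib]
    _ = ((∑ k : Fin N, (if k.val ≠ 0 then (x k - x (pF k))^2 else 0))
        + ∑ k : Fin N, (if k.val ≠ 0 then (x k - x (pF k))^2 else 0))/2 := by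
        congr 1
        congr 1
        · apply Finset.sum_congr rfl
          intro i _
          by_cases h : i.val ≠ 0 <;> simp [h]
        · rw [Finset.sum_comm]
          apply Finset.sum_congr rfl
          intro j _
          by_cases h : j.val ≠ 0 <;> simp [h]
          rw [← neg_sub, neg_sq]
    _ = ∑ k : Fin N, (if k.val ≠ 0 then (x k - x (pF k))^2 else 0) := add_self_div_two _

lemma sum_block (f : ℕ → ℝ) (t : ℕ) :
    ∑ k ∈ Finset.range (2 + 4*t), f k
      = f 0 + f 1 + ∑ i ∈ Finset.range t, (f (4*i+2) + f (4*i+3) + f (4*i+4) + f (4*i+5)) := by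
  induction t with
  | zero => simp [Finset.sum_range_succ]
  | succ t ih =>
    have e : 2 + 4*(t+1) = (((2+4*t)+1)+1)+1+1 := by ring
    rw [e, Finset.sum_range_succ, Finset.sum_range_succ, Finset.sum_range_succ,
      Finset.sum_range_succ, ih, Finset.sum_range_succ]
    have e1 : 2+4*t = 4*t+2 := by ring
    rw [e1]
    have e2 : 4*t+2+1 = 4*t+3 := by omega
    have e3 : 4*t+2+2 = 4*t+4 := by omega
    have e4 : 4*t+2+3 = 4*t+5 := by omega
    rw [e2, e3, e4]
    ring

def cext {m : ℕ} (c : Fin m → ℝ) (j : ℕ) : ℝ := if h : j < m then c ⟨j, h⟩ else 0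

lemma cext_add {m : ℕ} (c d : Fin m → ℝ) (j : ℕ) : cext (c + d) j = cext c j + cext d j := by
  unfold cext; split <;> simp

lemma cext_smul {m : ℕ} (a : ℝ) (c : Fin m → ℝ) (j : ℕ) : cext (a • c) j = a * cext c j := by
  unfold cext; split <;> simp

def yposf {m : ℕ} (c : Fin m → ℝ) (j : ℕ) : ℝ := if j % 4 = 0 then 0 else cext c (j / 2)

def ynegf {m : ℕ} (c : Fin m → ℝ) (j : ℕ) : ℝ :=
  if j % 2 = 0 then cext c (j/2) else -(cext c (j/2))

noncomputable def PhiPos (t : ℕ) : (Fin (2*t+1) → ℝ) →ₗ[ℝ] (Fin (4*t+2) → ℝ) where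
  toFun c := fun k => yposf c k.val
  map_add' c d := by funext k; simp only [yposf, Pi.add_apply, Pi.smul_apply, RingHom.id_apply, smul_eq_mul]; split_ifs <;> simp [cext_add]
  map_smul' a c := by funext k; simp only [yposf, Pi.add_apply, Pi.smul_apply, RingHom.id_apply, smul_eq_mul]; split_ifs <;> simp [cext_smul]

noncomputable def PhiNeg (t : ℕ) : (Fin (2*t+1) → ℝ) →ₗ[ℝ] (Fin (4*t+2) → ℝ) where
  toFun c := fun k => ynegf c k.val
  map_add' c d := by funext k; simp only [ynegf, Pi.add_apply, Pi.smul_apply, RingHom.id_apply, smul_eq_mul]; split_ifs <;> simp [cext_add] <;> ring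
  map_smul' a c := by funext k; simp only [ynegf, Pi.add_apply, Pi.smul_apply, RingHom.id_apply, smul_eq_mul]; split_ifs <;> simp [cext_smul] <;> ring

lemma PhiPos_inj (t : ℕ) : Function.Injective (PhiPos t) := by
  rw [injective_iff_map_eq_zero]
  intro c hc
  funext j
  have hj : 2 * j.val + 1 < 4*t+2 := by omega
  have := congrFun hc ⟨2*j.val+1, hj⟩
  simp only [PhiPos, LinearMap.coe_mk, AddHom.coe_mk, yposf, cext] at this
  have h4 : (2*j.val+1) % 4 ≠ 0 := by omega
  rw [if_neg h4] at this
  have h2 : (2*j.val+1)/2 = j.val := by omega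
  rw [h2, dif_pos j.isLt] at this
  simpa using this

lemma PhiNeg_inj (t : ℕ) : Function.Injective (PhiNeg t) := by
  rw [injective_iff_map_eq_zero]
  intro c hc
  funext j
  have hj : 2 * j.val < 4*t+2 := by omega
  have := congrFun hc ⟨2*j.val, hj⟩
  simp only [PhiNeg, LinearMap.coe_mk, AddHom.coe_mk, ynegf, cext] at this
  have h4 : (2*j.val) % 2 = 0 := by omega
  rw [if_pos h4] at this
  have h2 : (2*j.val)/2 = j.val := by omega
  rw [h2, dif_pos j.isLt] at this
  simpa using this
lemma yposf_two (m : ℕ) (c : Fin m → ℝ) (i : ℕ) : yposf c (4*i+2) = cext c (2*i+1) := by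
  rw [yposf, if_neg (by omega), show (4*i+2)/2 = 2*i+1 by omega]
lemma yposf_three (m : ℕ) (c : Fin m → ℝ) (i : ℕ) : yposf c (4*i+3) = cext c (2*i+1) := by
  rw [yposf, if_neg (by omega), show (4*i+3)/2 = 2*i+1 by omega]
lemma yposf_four (m : ℕ) (c : Fin m → ℝ) (i : ℕ) : yposf c (4*i+4) = 0 := by
  rw [yposf, if_pos (by omega)]
lemma yposf_five (m : ℕ) (c : Fin m → ℝ) (i : ℕ) : yposf c (4*i+5) = cext c (2*i+2) := by
  rw [yposf, if_neg (by omega), show (4*i+5)/2 = 2*i+2 by omega]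
lemma yposf_zero (m : ℕ) (c : Fin m → ℝ) : yposf c 0 = 0 := by rw [yposf, if_pos (by omega)]
lemma yposf_one (m : ℕ) (c : Fin m → ℝ) : yposf c 1 = cext c 0 := by
  rw [yposf, if_neg (by omega)]

lemma ynegf_two (m : ℕ) (c : Fin m → ℝ) (i : ℕ) : ynegf c (4*i+2) = cext c (2*i+1) := by
  rw [ynegf, if_pos (by omega), show (4*i+2)/2 = 2*i+1 by omega]
lemma ynegf_three (m : ℕ) (c : Fin m → ℝ) (i : ℕ) : ynegf c (4*i+3) = -cext c (2*i+1) := by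
  rw [ynegf, if_neg (by omega), show (4*i+3)/2 = 2*i+1 by omega]
lemma ynegf_four (m : ℕ) (c : Fin m → ℝ) (i : ℕ) : ynegf c (4*i+4) = cext c (2*i+2) := by
  rw [ynegf, if_pos (by omega), show (4*i+4)/2 = 2*i+2 by omega]
lemma ynegf_five (m : ℕ) (c : Fin m → ℝ) (i : ℕ) : ynegf c (4*i+5) = -cext c (2*i+2) := by
  rw [ynegf, if_neg (by omega), show (4*i+5)/2 = 2*i+2 by omega]
lemma ynegf_zero (m : ℕ) (c : Fin m → ℝ) : ynegf c 0 = cext c 0 := by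
  rw [ynegf, if_pos (by omega)]
lemma ynegf_one (m : ℕ) (c : Fin m → ℝ) : ynegf c 1 = -cext c 0 := by
  rw [ynegf, if_neg (by omega)]

lemma pnat_one : pnat 1 = 0 := by rw [pnat, if_neg (by omega)]
lemma pnat_two (i : ℕ) : pnat (4*i+2) = 0 := by rw [pnat, if_pos (by omega)]
lemma pnat_three (i : ℕ) : pnat (4*i+3) = 4*i+2 := by rw [pnat, if_neg (by omega)]; omega
lemma pnat_four (i : ℕ) : pnat (4*i+4) = 4*i+3 := by rw [pnat, if_neg (by omega)]; omega
lemma pnat_five (i : ℕ) : pnat (4*i+5) = 4*i+4 := by rw [pnat, if_neg (by omega)]; omega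

/-- key inequality, positive side (sums over range) -/
lemma pos_sum_eq (t : ℕ) (c : Fin (2*t+1) → ℝ) :
    ∑ j ∈ Finset.range (2+4*t), (if j ≠ 0 then (yposf c j - yposf c (pnat j))^2 else 0)
      = ∑ j ∈ Finset.range (2+4*t), (yposf c j)^2 := by
  rw [sum_block, sum_block]
  have hhead : (if (0:ℕ) ≠ 0 then (yposf c 0 - yposf c (pnat 0))^2 else 0) = 0 := by simp
  rw [hhead]
  simp only [if_pos (by omega : (1:ℕ) ≠ 0), pnat_one]
  rw [yposf_zero, yposf_one]
  congr 1
  · ring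
  · apply Finset.sum_congr rfl
    intro i _
    simp only [if_pos (by omega : 4*i+2 ≠ 0), if_pos (by omega : 4*i+3 ≠ 0),
      if_pos (by omega : 4*i+4 ≠ 0), if_pos (by omega : 4*i+5 ≠ 0),
      pnat_two, pnat_three, pnat_four, pnat_five,
      yposf_zero, yposf_two, yposf_three, yposf_four, yposf_five]
    ring

lemma neg_sum_ge (t : ℕ) (c : Fin (2*t+1) → ℝ) :
    2 * ∑ j ∈ Finset.range (2+4*t), (ynegf c j)^2
      ≤ ∑ j ∈ Finset.range (2+4*t), (if j ≠ 0 then (ynegf c j - ynegf c (pnat j))^2 else 0) := by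
  rw [sum_block, sum_block]
  have hhead : (if (0:ℕ) ≠ 0 then (ynegf c 0 - ynegf c (pnat 0))^2 else 0) = 0 := by simp
  rw [hhead]
  simp only [if_pos (by omega : (1:ℕ) ≠ 0), pnat_one]
  rw [ynegf_zero, ynegf_one, mul_add, mul_add]
  apply add_le_add
  · ring_nf
    nlinarith [sq_nonneg (cext c 0)]
  · rw [Finset.mul_sum]
    apply Finset.sum_le_sum
    intro i _
    simp only [if_pos (by omega : 4*i+2 ≠ 0), if_pos (by omega : 4*i+3 ≠ 0),
      if_pos (by omega : 4*i+4 ≠ 0), if_pos (by omega : 4*i+5 ≠ 0),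
      pnat_two, pnat_three, pnat_four, pnat_five,
      ynegf_zero, ynegf_two, ynegf_three, ynegf_four, ynegf_five]
    nlinarith [sq_nonneg (cext c (2*i+1) - cext c 0), sq_nonneg (cext c (2*i+2) + cext c (2*i+1))]

open SimpleGraph
lemma spider_reach {N : ℕ} (hN : 0 < N) :
    ∀ (j : ℕ) (h : j < N), (spider N).Reachable ⟨j, h⟩ ⟨0, hN⟩ := by
  intro j
  induction j using Nat.strong_induction_on with
  | _ j ih =>
    intro h
    by_cases hj : j = 0
    · subst hj; rfl
    · have hadj : (spider N).Adj ⟨j, h⟩ (pF ⟨j, h⟩) := by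
        rw [spider_adj_iff]
        exact Or.inl ⟨hj, rfl⟩
      exact (hadj.reachable).trans (ih (pnat j) (pnat_lt hj) _)

lemma spider_connected {N : ℕ} (hN : 0 < N) : (spider N).Connected := by
  rw [connected_iff]
  refine ⟨?_, ⟨⟨0, hN⟩⟩⟩
  intro u v
  exact (spider_reach hN u.val (by simpa using u.isLt)).trans
    (spider_reach hN v.val (by simpa using v.isLt)).symm

lemma path_loop_nil {V : Type*} {G : SimpleGraph V} {u : V} (p : G.Walk u u)
    (hp : p.IsPath) : p = SimpleGraph.Walk.nil := by
  cases p with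
  | nil => rfl
  | cons h q =>
    rw [SimpleGraph.Walk.cons_isPath_iff] at hp
    exact absurd (SimpleGraph.Walk.end_mem_support q) hp.2

lemma adj_lt_eq_pF {N : ℕ} {m b : Fin N} (hadj : (spider N).Adj m b) (hlt : b < m) :
    b = pF m := by
  rcases (spider_adj_iff m b).mp hadj with ⟨h0, hp⟩ | ⟨h0, hp⟩
  · exact hp.symm
  · exfalso
    have h1 : pnat b.val = m.val := congrArg Fin.val hp
    have := pnat_lt h0
    have : b.val < m.val := hlt
    omega

lemma spider_acyclic (N : ℕ) : (spider N).IsAcyclic := by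
  intro v c hc
  -- max vertex of the cycle
  classical
  have hvmem : v ∈ c.support := SimpleGraph.Walk.start_mem_support c
  set S : Finset (Fin N) := c.support.toFinset with hS
  have hSne : S.Nonempty := ⟨v, by simp [hS]⟩
  set m : Fin N := S.max' hSne with hm
  have hmmem : m ∈ c.support := by
    have := S.max'_mem hSne
    simpa [hS] using this
  have hbound : ∀ u, u ∈ c.support → u ≤ m := by
    intro u hu
    exact S.le_max' u (by simp [hS, hu])
  set c' := c.rotate m hmmem with hc'def
  have hc' : (c.rotate m hmmem).IsCycle := hc.rotate hmmem
  have hbound' : ∀ u, u ∈ (c.rotate m hmmem).support → u ≤ m := by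
    intro u hu
    rcases (SimpleGraph.Walk.mem_support_iff _).mp hu with h | h
    · exact h ▸ le_refl m
    · have hperm := SimpleGraph.Walk.support_rotate c m hmmem
      have : u ∈ c.support.tail := hperm.mem_iff.mp h
      exact hbound u (List.mem_of_mem_tail this)
  revert hc' hbound'
  generalize c.rotate m hmmem = w
  intro hc' hbound'
  cases w with
  | nil => exact SimpleGraph.Walk.IsCycle.not_of_nil hc'
  | @cons _ b _ h q =>
    have hq : q.IsPath ∧ ¬ s(m, b) ∈ q.edges := (SimpleGraph.Walk.cons_isCycle_iff q h).mp hc'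
    have hlen : 2 ≤ q.length := by
      have := hc'.three_le_length
      simp only [SimpleGraph.Walk.length_cons] at this
      omega
    have hble : b ≤ m := hbound' b (by
      simp [SimpleGraph.Walk.support_cons, SimpleGraph.Walk.start_mem_support])
    have hbm : b = pF m := adj_lt_eq_pF h (lt_of_le_of_ne hble h.ne')
    -- reverse of q
    have hqrev : q.reverse.IsPath := hq.1.reverse
    have hqrnil : ¬ q.reverse.Nil := by
      rw [SimpleGraph.Walk.nil_iff_length_eq, SimpleGraph.Walk.length_reverse]
      omega
    cases hrw : q.reverse with
    | nil => rw [hrw] at hqrnil; exact hqrnil SimpleGraph.Walk.Nil.nil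
    | @cons _ b' _ h' q'' =>
      have hb'mem : b' ∈ q.support := by
        have : b' ∈ q.reverse.support := by
          rw [hrw]
          simp [SimpleGraph.Walk.support_cons, SimpleGraph.Walk.start_mem_support]
        rwa [SimpleGraph.Walk.support_reverse, List.mem_reverse] at this
      have hb'le : b' ≤ m := hbound' b' (by
        simp [SimpleGraph.Walk.support_cons, hb'mem])
      have hb'm : b' = pF m := adj_lt_eq_pF h' (lt_of_le_of_ne hb'le h'.ne')
      -- so b' = b; q'' is a path from b to b, hence nil, hence q has length 1
      have hbb : b' = b := by rw [hb'm, hbm]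
      subst hbb
      have hq''path : q''.IsPath := by
        have : (SimpleGraph.Walk.cons h' q'').IsPath := hrw ▸ hqrev
        exact (SimpleGraph.Walk.cons_isPath_iff h' q'').mp this |>.1
      have : q'' = SimpleGraph.Walk.nil := path_loop_nil q'' hq''path
      have hlen1 : q.reverse.length = 1 := by
        rw [hrw, SimpleGraph.Walk.length_cons, this, SimpleGraph.Walk.length_nil]
      rw [SimpleGraph.Walk.length_reverse] at hlen1
      omega

lemma spider_isTree {N : ℕ} (hN : 0 < N) : (spider N).IsTree :=
  ⟨spider_connected hN, spider_acyclic N⟩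
section Dom
variable (t : ℕ)

/-- the dominating set: center plus the `v` vertices -/
noncomputable def domSet : Finset (Fin (4*t+2)) :=
  insert ⟨0, by omega⟩
    (Finset.image (fun i : Fin t => (⟨4*i.val+4, by omega⟩ : Fin (4*t+2))) Finset.univ)

lemma domSet_card : (domSet t).card = t + 1 := by
  rw [domSet, Finset.card_insert_of_notMem, Finset.card_image_of_injective]
  · simp
  · intro i j hij
    have := congrArg Fin.val hij
    simp only at this
    exact Fin.ext (by omega)
  · simp only [Finset.mem_image]
    rintro ⟨i, -, hi⟩
    have := congrArg Fin.val hi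
    simp at this

lemma mem_domSet_of_val {j : ℕ} (hj : j < 4*t+2) (h : j = 0 ∨ (j % 4 = 0 ∧ 4 ≤ j)) :
    (⟨j, hj⟩ : Fin (4*t+2)) ∈ domSet t := by
  rcases h with h | ⟨h4, hge⟩
  · subst h; exact Finset.mem_insert_self _ _
  · apply Finset.mem_insert_of_mem
    rw [Finset.mem_image]
    refine ⟨⟨(j-4)/4, by omega⟩, Finset.mem_univ _, ?_⟩
    exact Fin.ext (by simp; omega)

lemma domSet_dominates : IsDomSet (spider (4*t+2)) (domSet t) := by
  intro v
  set j := v.val with hjdef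
  have hj : j < 4*t+2 := v.isLt
  have hv : v = ⟨j, hj⟩ := Fin.ext rfl
  by_cases h0 : j = 0
  · left; rw [hv]; exact mem_domSet_of_val t hj (Or.inl h0)
  by_cases hin : j % 4 = 0
  · left; rw [hv]
    exact mem_domSet_of_val t hj (Or.inr ⟨hin, by omega⟩)
  right
  by_cases h2 : j % 4 = 1 ∧ 5 ≤ j
  · -- leaf of an arm: neighbor is j - 1 which is ≡ 0 mod 4, ≥ 4
    refine ⟨⟨j-1, by omega⟩, mem_domSet_of_val t _ (Or.inr ⟨by omega, by omega⟩), ?_⟩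
    rw [spider_adj_iff]
    right
    constructor
    · exact h0
    · apply Fin.ext
      show pnat j = j - 1
      unfold pnat
      rw [if_neg (by omega)]
  by_cases h3 : j % 4 = 3
  · -- b vertex: neighbor is j+1 ≡ 0 mod 4
    refine ⟨⟨j+1, by omega⟩, mem_domSet_of_val t _ (Or.inr ⟨by omega, by omega⟩), ?_⟩
    rw [spider_adj_iff]
    left
    constructor
    · simp
    · apply Fin.ext
      show pnat (j+1) = j
      unfold pnat
      rw [if_neg (by omega)]
      omega
  · -- j = 1 or j % 4 = 2 : adjacent to the center 0
    refine ⟨⟨0, by omega⟩, mem_domSet_of_val t _ (Or.inl rfl), ?_⟩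
    rw [spider_adj_iff]
    right
    constructor
    · exact h0
    · apply Fin.ext
      show pnat j = 0
      unfold pnat
      split <;> omega

lemma adj_leaf_eq_parent {j : ℕ} (hj : j < 4*t+2) (h1 : j % 4 = 1) (u : Fin (4*t+2))
    (hadj : (spider (4*t+2)).Adj u ⟨j, hj⟩) : u = pF ⟨j, hj⟩ := by
  rcases (spider_adj_iff u ⟨j, hj⟩).mp hadj with ⟨h0, hp⟩ | ⟨h0, hp⟩
  · exfalso
    have hval : pnat u.val = j := congrArg Fin.val hp
    unfold pnat at hval
    split at hval <;> omega
  · exact hp.symm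

lemma domSet_lower (D : Finset (Fin (4*t+2))) (hD : IsDomSet (spider (4*t+2)) D) :
    t + 1 ≤ D.card := by
  classical
  have hleaf : ∀ j : Fin (t+1), ∃ u : Fin (4*t+2), u ∈ D ∧
      (u.val = 4*j.val+1 ∨ u.val = 4*j.val) := by
    intro j
    have hjlt : 4*j.val+1 < 4*t+2 := by have := j.isLt; omega
    rcases hD ⟨4*j.val+1, hjlt⟩ with h | ⟨u, huD, hadj⟩
    · exact ⟨_, h, Or.inl rfl⟩
    · refine ⟨u, huD, Or.inr ?_⟩
      have := adj_leaf_eq_parent t hjlt (by omega) u hadj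
      have hval : u.val = pnat (4*j.val+1) := congrArg Fin.val this
      unfold pnat at hval
      rw [if_neg (by omega)] at hval
      omega
  choose g hgD hgval using hleaf
  have hinj : Set.InjOn g ↑(Finset.univ : Finset (Fin (t+1))) := by
    intro a _ b _ hab
    rcases hgval a with h1 | h1 <;> rcases hgval b with h2 | h2 <;>
      (rw [hab] at h1; exact Fin.ext (by omega))
  have := Finset.card_le_card_of_injOn g (fun a _ => hgD a) hinj
  simpa using this

lemma spider_domNum : domNum (spider (4*t+2)) = t + 1 := by
  apply le_antisymm
  · apply Nat.sInf_le
    exact ⟨domSet t, domSet_dominates t, domSet_card t⟩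
  · have hne : {n : ℕ | ∃ D : Finset (Fin (4*t+2)),
        IsDomSet (spider (4*t+2)) D ∧ D.card = n}.Nonempty :=
      ⟨t+1, ⟨domSet t, domSet_dominates t, domSet_card t⟩⟩
    apply le_csInf hne
    rintro b ⟨D, hD, rfl⟩
    exact domSet_lower t D hD
end Dom


section Bridge
open Matrix SimpleGraph
variable (t : ℕ)

@[simp] lemma PhiPos_apply (c : Fin (2*t+1) → ℝ) (k : Fin (4*t+2)) :
    PhiPos t c k = yposf c k.val := rfl
@[simp] lemma PhiNeg_apply (c : Fin (2*t+1) → ℝ) (k : Fin (4*t+2)) :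
    PhiNeg t c k = ynegf c k.val := rfl
@[simp] lemma pF_coe {N : ℕ} (k : Fin N) : ((pF k : Fin N) : ℕ) = pnat k.val := rfl

variable [inst : DecidableRel (spider (4*t+2)).Adj]

lemma pos_quad (c : Fin (2*t+1) → ℝ) (hc : c ≠ 0) :
    (PhiPos t c) ⬝ᵥ ((spider (4*t+2)).lapMatrix ℝ) *ᵥ (PhiPos t c)
      < 2 * ((PhiPos t c) ⬝ᵥ (PhiPos t c)) := by
  have hq := spider_quad (N := 4*t+2) (PhiPos t c)
  have h1 : ∑ k : Fin (4*t+2),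
      (if (k : ℕ) ≠ 0 then ((PhiPos t c) k - (PhiPos t c) (pF k))^2 else 0)
      = ∑ j ∈ Finset.range (2+4*t), (if j ≠ 0 then (yposf c j - yposf c (pnat j))^2 else 0) := by
    rw [show (2+4*t) = 4*t+2 by ring,
      ← Fin.sum_univ_eq_sum_range (fun j => if j ≠ 0 then (yposf c j - yposf c (pnat j))^2 else 0) (4*t+2)]
    exact Finset.sum_congr rfl fun k _ => rfl
  have h2 : (PhiPos t c) ⬝ᵥ (PhiPos t c) = ∑ j ∈ Finset.range (2+4*t), (yposf c j)^2 := by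
    rw [dotProduct, show (2+4*t) = 4*t+2 by ring,
      ← Fin.sum_univ_eq_sum_range (fun j => (yposf c j)^2) (4*t+2)]
    exact Finset.sum_congr rfl fun k _ => by rw [pow_two]; rfl
  rw [hq, h1, h2, pos_sum_eq]
  have hpos : 0 < ∑ j ∈ Finset.range (2+4*t), (yposf c j)^2 := by
    obtain ⟨j0, hj0⟩ := Function.ne_iff.mp hc
    apply Finset.sum_pos' (fun j _ => sq_nonneg _)
    refine ⟨2*j0.val+1, Finset.mem_range.mpr (by have := j0.isLt; omega), ?_⟩
    have hy : yposf c (2*j0.val+1) = c j0 := by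
      rw [yposf, if_neg (by omega), show (2*j0.val+1)/2 = j0.val by omega, cext,
        dif_pos j0.isLt]
    rw [hy]
    have : c j0 ≠ 0 := by simpa using hj0
    exact lt_of_le_of_ne (sq_nonneg _) (Ne.symm (pow_ne_zero 2 this))
  linarith

lemma neg_quad (c : Fin (2*t+1) → ℝ) :
    2 * ((PhiNeg t c) ⬝ᵥ (PhiNeg t c))
      ≤ (PhiNeg t c) ⬝ᵥ ((spider (4*t+2)).lapMatrix ℝ) *ᵥ (PhiNeg t c) := by
  have hq := spider_quad (N := 4*t+2) (PhiNeg t c)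
  have h1 : ∑ k : Fin (4*t+2),
      (if (k : ℕ) ≠ 0 then ((PhiNeg t c) k - (PhiNeg t c) (pF k))^2 else 0)
      = ∑ j ∈ Finset.range (2+4*t), (if j ≠ 0 then (ynegf c j - ynegf c (pnat j))^2 else 0) := by
    rw [show (2+4*t) = 4*t+2 by ring,
      ← Fin.sum_univ_eq_sum_range (fun j => if j ≠ 0 then (ynegf c j - ynegf c (pnat j))^2 else 0) (4*t+2)]
    exact Finset.sum_congr rfl fun k _ => rfl
  have h2 : (PhiNeg t c) ⬝ᵥ (PhiNeg t c) = ∑ j ∈ Finset.range (2+4*t), (ynegf c j)^2 := by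
    rw [dotProduct, show (2+4*t) = 4*t+2 by ring,
      ← Fin.sum_univ_eq_sum_range (fun j => (ynegf c j)^2) (4*t+2)]
    exact Finset.sum_congr rfl fun k _ => by rw [pow_two]; rfl
  rw [hq, h1, h2]
  exact neg_sum_ge t c

lemma spider_nu :
    Nat.card {i : Fin (4*t+2) //
      2 ≤ (SimpleGraph.posSemidef_lapMatrix ℝ (spider (4*t+2))).isHermitian.eigenvalues i}
      = 2*t+1 := by
  have hA := (SimpleGraph.posSemidef_lapMatrix ℝ (spider (4*t+2))).isHermitian
  have hlow := count_ge hA 2 (PhiNeg t) (PhiNeg_inj t) (fun c => neg_quad t c)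
  have hup := count_le hA 2 (PhiPos t) (PhiPos_inj t) (fun c hc => pos_quad t c hc)
  omega

end Bridge
end SpiderDef

/-- For every integer `n ≥ 2` there exists a finite tree `T` with
`γ(T) = n` and `ν(T) = 2n − 1`, where `ν(T)` is the number of Laplacian eigenvalues
(with multiplicity) that are at least `2`. -/
theorem exists_tree_gamma_n_nu_two_n_sub_one :
    ∀ n : ℕ, 2 ≤ n → ∃ (N : ℕ) (G : SimpleGraph (Fin N)),
      G.IsTree ∧ domNum G = n ∧ nuNum G = 2 * n - 1 := by
  intro n hn
  have ht : 1 ≤ n - 1 := by omega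
  refine ⟨4*(n-1)+2, spider (4*(n-1)+2), spider_isTree (by omega), ?_, ?_⟩
  · rw [spider_domNum]
    omega
  · have h21 : 2*n - 1 = 2*(n-1)+1 := by omega
    rw [h21]
    exact @spider_nu (n-1) (Classical.decRel _)
end
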